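/- arXiv:2103.15778 — 5 statements merged into one kernel-verified Lean document; each statement's English description precedes it below -/
import Mathlib

section
/- In any rook circuit on an n × m chessboard, every row contains an even number of cells in which the path turns, and likewise every column contains an even number of turn-cells. -/
open SimpleGraph Walk List

variable {V : Type*} {G : SimpleGraph V}

lemma walk_cut_parity (S : V → Bool) : ∀ {u v : V} (p : G.Walk u v),
    ((p.darts.countP (fun d => S d.fst != S d.snd) : ℕ) : ZMod 2)
      = if S u = S v then 0 else 1 := by
  intro u v p
  induction p with
  | nil => simp
  | @cons u x v h q ih =>
    rw [Walk.darts_cons, List.countP_cons]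
    push_cast
    rw [ih]
    cases hu : S u <;> cases hx : S x <;> cases hv : S v <;> simp [hu, hx, hv] <;> decide

lemma closed_walk_cut_even (S : V → Bool) {u : V} (p : G.Walk u u) :
    Even (p.darts.countP (fun d => S d.fst != S d.snd)) := by
  have := walk_cut_parity (G := G) S p
  rw [if_pos rfl] at this
  rw [ZMod.natCast_eq_zero_iff] at this
  exact even_iff_two_dvd.mpr this

variable [DecidableEq V]

lemma darts_snd_count {v₀ : V} (w : G.Walk v₀ v₀) (hw : w.IsHamiltonianCycle) (v : V) :
    w.darts.countP (fun d => d.snd == v) = 1 := by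
  have h2 : w.support.tail.count v = 1 := by
    rw [← Walk.support_tail_of_not_nil w hw.1.not_nil]; exact hw.isHamiltonian_tail v
  rw [← w.map_snd_darts] at h2
  rw [List.count, List.countP_map] at h2
  exact h2

lemma darts_fst_count {v₀ : V} (w : G.Walk v₀ v₀) (hw : w.IsHamiltonianCycle) (v : V) :
    w.darts.countP (fun d => d.fst == v) = 1 := by
  have key : w.support.dropLast.count v = 1 := by
    have hsplit := List.dropLast_append_getLast (w.support_ne_nil)
    rw [w.getLast_support] at hsplit
    have htail : w.support = v₀ :: w.support.tail := by
      rw [← Walk.support_tail_of_not_nil w hw.1.not_nil, Walk.cons_support_tail hw.1.not_nil]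
    have hc : w.support.count v = w.support.dropLast.count v + List.count v [v₀] := by
      rw [← List.count_append, hsplit]
    have hc2 : w.support.count v = List.count v [v₀] + w.support.tail.count v := by
      conv_lhs => rw [htail]
      rw [show (v₀ :: w.support.tail) = [v₀] ++ w.support.tail from rfl, List.count_append]
    have h2 : w.support.tail.count v = 1 := by
      rw [← Walk.support_tail_of_not_nil w hw.1.not_nil]; exact hw.isHamiltonian_tail v
    omega
  rw [← w.map_fst_darts] at key
  rw [List.count, List.countP_map] at key
  exact key

lemma main_parity [Fintype V] {v₀ : V} (w : G.Walk v₀ v₀) (hw : w.IsHamiltonianCycle)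
    (c : V → ℕ)
    (hstep : ∀ d ∈ w.darts, c d.fst = c d.snd ∨ c d.fst + 1 = c d.snd ∨ c d.snd + 1 = c d.fst)
    (T : V → Prop)
    (hT : ∀ v, ∀ d₁ ∈ w.darts, ∀ d₂ ∈ w.darts, d₁.fst = v → d₂.snd = v →
      (∀ d ∈ w.darts, d.fst = v → d = d₁) → (∀ d ∈ w.darts, d.snd = v → d = d₂) →
      (T v ↔ ¬ (c d₁.fst = c d₁.snd ↔ c d₂.fst = c d₂.snd)))
    (i : ℕ) :
    Even {v | c v = i ∧ T v}.ncard := by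
  classical
  have hnodup : w.darts.Nodup := by
    have := hw.isCycle.edges_nodup
    exact (List.Nodup.of_map Dart.edge (by rwa [Walk.edges] at this))
  set Df : Finset G.Dart := w.darts.toFinset with hDf
  have hmemDf : ∀ d : G.Dart, d ∈ Df ↔ d ∈ w.darts := fun d => List.mem_toFinset
  have hcard : ∀ p : G.Dart → Bool, (Df.filter (fun d => p d = true)).card = w.darts.countP p := by
    intro p
    rw [hDf, ← List.toFinset_filter, List.card_toFinset, (hnodup.filter p).dedup,
      List.countP_eq_length_filter]
  -- out and in darts
  have hOut : ∀ v : V, ∃ d, d ∈ w.darts ∧ d.fst = v ∧ ∀ d' ∈ w.darts, d'.fst = v → d' = d := by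
    intro v
    obtain ⟨d, hd⟩ := Finset.card_eq_one.mp
      (by rw [hcard (fun d => d.fst == v)]; exact darts_fst_count w hw v :
        (Df.filter (fun d => (d.fst == v) = true)).card = 1)
    have hmem : d ∈ Df.filter (fun d => (d.fst == v) = true) := by rw [hd]; simp
    rw [Finset.mem_filter, beq_iff_eq] at hmem
    refine ⟨d, (hmemDf d).mp hmem.1, hmem.2, fun d' hd' hfst => ?_⟩
    have : d' ∈ Df.filter (fun d => (d.fst == v) = true) := by
      rw [Finset.mem_filter, beq_iff_eq]; exact ⟨(hmemDf d').mpr hd', hfst⟩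
    rw [hd, Finset.mem_singleton] at this; exact this
  have hIn : ∀ v : V, ∃ d, d ∈ w.darts ∧ d.snd = v ∧ ∀ d' ∈ w.darts, d'.snd = v → d' = d := by
    intro v
    obtain ⟨d, hd⟩ := Finset.card_eq_one.mp
      (by rw [hcard (fun d => d.snd == v)]; exact darts_snd_count w hw v :
        (Df.filter (fun d => (d.snd == v) = true)).card = 1)
    have hmem : d ∈ Df.filter (fun d => (d.snd == v) = true) := by rw [hd]; simp
    rw [Finset.mem_filter, beq_iff_eq] at hmem
    refine ⟨d, (hmemDf d).mp hmem.1, hmem.2, fun d' hd' hfst => ?_⟩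
    have : d' ∈ Df.filter (fun d => (d.snd == v) = true) := by
      rw [Finset.mem_filter, beq_iff_eq]; exact ⟨(hmemDf d').mpr hd', hfst⟩
    rw [hd, Finset.mem_singleton] at this; exact this
  choose out hout₁ hout₂ hout₃ using hOut
  choose inn hin₁ hin₂ hin₃ using hIn
  set chg : G.Dart → Prop := fun d => ¬ (c d.fst = c d.snd) with hchg
  -- per-vertex incident count
  have keyA : ∀ v : V, ((Df.filter (fun d => chg d ∧ (d.fst = v ∨ d.snd = v))).card : ZMod 2)
      = if T v then 1 else 0 := by
    intro v
    have hsplit : Df.filter (fun d => chg d ∧ (d.fst = v ∨ d.snd = v))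
        = Df.filter (fun d => chg d ∧ d.fst = v) ∪ Df.filter (fun d => chg d ∧ d.snd = v) := by
      rw [← Finset.filter_or]
      exact Finset.filter_congr (fun d _ => by tauto)
    have hdisj : Disjoint (Df.filter (fun d => chg d ∧ d.fst = v))
        (Df.filter (fun d => chg d ∧ d.snd = v)) := by
      rw [Finset.disjoint_left]
      intro d hd1 hd2
      rw [Finset.mem_filter] at hd1 hd2
      exact d.fst_ne_snd (hd1.2.2.trans hd2.2.2.symm)
    have hf1 : Df.filter (fun d => chg d ∧ d.fst = v) = if chg (out v) then {out v} else ∅ := by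
      ext d
      simp only [Finset.mem_filter, hmemDf]
      constructor
      · rintro ⟨hd, hc, hfst⟩
        rw [hout₃ v d hd hfst, if_pos (by rwa [hout₃ v d hd hfst] at hc)]
        simp
      · intro hd
        split_ifs at hd with h
        · rw [Finset.mem_singleton] at hd
          subst hd
          exact ⟨hout₁ v, h, hout₂ v⟩
        · simp at hd
    have hf2 : Df.filter (fun d => chg d ∧ d.snd = v) = if chg (inn v) then {inn v} else ∅ := by
      ext d
      simp only [Finset.mem_filter, hmemDf]
      constructor
      · rintro ⟨hd, hc, hfst⟩
        rw [hin₃ v d hd hfst, if_pos (by rwa [hin₃ v d hd hfst] at hc)]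
        simp
      · intro hd
        split_ifs at hd with h
        · rw [Finset.mem_singleton] at hd
          subst hd
          exact ⟨hin₁ v, h, hin₂ v⟩
        · simp at hd
    have hTv : T v ↔ ¬ (chg (out v) ↔ chg (inn v)) := by
      have := hT v (out v) (hout₁ v) (inn v) (hin₁ v) (hout₂ v) (hin₂ v) (hout₃ v) (hin₃ v)
      rw [this, hchg]
      tauto
    rw [hsplit, Finset.card_union_of_disjoint hdisj, hf1, hf2]
    by_cases h1 : chg (out v) <;> by_cases h2 : chg (inn v)
    · rw [if_pos h1, if_pos h2, if_neg (by rw [hTv]; tauto)]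
      norm_num
      decide
    · rw [if_pos h1, if_neg h2, if_pos (by rw [hTv]; tauto)]
      norm_num
    · rw [if_neg h1, if_pos h2, if_pos (by rw [hTv]; tauto)]
      norm_num
    · rw [if_neg h1, if_neg h2, if_neg (by rw [hTv]; tauto)]
      norm_num
  set row : Finset V := Finset.univ.filter (fun v => c v = i) with hrow
  have keyB : ∑ v ∈ row, (Df.filter (fun d => chg d ∧ (d.fst = v ∨ d.snd = v))).card
      = (Df.filter (fun d => chg d ∧ c d.fst = i)).card
        + (Df.filter (fun d => chg d ∧ c d.snd = i)).card := by
    simp only [Finset.card_filter]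
    rw [Finset.sum_comm, ← Finset.sum_add_distrib]
    apply Finset.sum_congr rfl
    intro d hd
    by_cases hc : chg d
    · have hterm : ∀ v ∈ row, (if chg d ∧ (d.fst = v ∨ d.snd = v) then 1 else 0)
          = (if d.fst = v then 1 else 0) + (if d.snd = v then (1:ℕ) else 0) := by
        intro v _
        have hne := d.fst_ne_snd
        by_cases h1 : d.fst = v <;> by_cases h2 : d.snd = v
        · exact absurd (h1.trans h2.symm) hne
        · rw [if_pos ⟨hc, Or.inl h1⟩, if_pos h1, if_neg h2]
        · rw [if_pos ⟨hc, Or.inr h2⟩, if_neg h1, if_pos h2]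
        · rw [if_neg (by tauto), if_neg h1, if_neg h2]
      rw [Finset.sum_congr rfl hterm, Finset.sum_add_distrib, Finset.sum_ite_eq,
        Finset.sum_ite_eq]
      simp only [hrow, Finset.mem_filter, Finset.mem_univ, true_and]
      split_ifs <;> first | omega | tauto
    · simp [hc]
  have keyC : ∀ d ∈ Df, ((if chg d ∧ c d.fst = i then 1 else 0)
        + (if chg d ∧ c d.snd = i then 1 else 0) : ℕ)
      = (if (decide (c d.fst ≤ i) != decide (c d.snd ≤ i)) = true then 1 else 0)
        + (if (decide (c d.fst < i) != decide (c d.snd < i)) = true then 1 else 0) := by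
    intro d hd
    have h := hstep d ((hmemDf d).mp hd)
    simp only [hchg, bne_iff_ne, ne_eq, decide_eq_decide]
    split_ifs <;> omega
  have keyD : Even (∑ v ∈ row, (Df.filter (fun d => chg d ∧ (d.fst = v ∨ d.snd = v))).card) := by
    rw [keyB]
    have e1 : (Df.filter (fun d => chg d ∧ c d.fst = i)).card
          + (Df.filter (fun d => chg d ∧ c d.snd = i)).card
        = (Df.filter (fun d => (decide (c d.fst ≤ i) != decide (c d.snd ≤ i)) = true)).card
          + (Df.filter (fun d => (decide (c d.fst < i) != decide (c d.snd < i)) = true)).card := by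
      simp only [Finset.card_filter]
      rw [← Finset.sum_add_distrib, ← Finset.sum_add_distrib]
      exact Finset.sum_congr rfl keyC
    rw [e1]
    refine Even.add ?_ ?_
    · rw [hcard]
      exact closed_walk_cut_even (fun x => decide (c x ≤ i)) w
    · rw [hcard]
      exact closed_walk_cut_even (fun x => decide (c x < i)) w
  have hset : {v | c v = i ∧ T v}.ncard = (row.filter T).card := by
    rw [Set.ncard_eq_toFinset_card', Set.toFinset_setOf]
    rw [hrow, Finset.filter_filter]
  rw [hset]
  have hz : ((row.filter T).card : ZMod 2) = 0 := by
    rw [Finset.card_filter]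
    push_cast
    rw [Finset.sum_congr rfl (fun v _ => (keyA v).symm), ← Nat.cast_sum,
      ZMod.natCast_eq_zero_iff]
    exact even_iff_two_dvd.mp keyD
  rw [ZMod.natCast_eq_zero_iff] at hz
  exact even_iff_two_dvd.mpr hz



/-- The grid graph on an `n × m` board: vertices are cells `(row, column)`,
edges join orthogonally adjacent cells. -/
def gridGraph (n m : ℕ) : SimpleGraph (Fin n × Fin m) :=
  SimpleGraph.fromRel (fun a b =>
    (a.1 = b.1 ∧ (a.2 : ℕ) + 1 = (b.2 : ℕ)) ∨
    (a.2 = b.2 ∧ (a.1 : ℕ) + 1 = (b.1 : ℕ)))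

/-- An edge is horizontal if its endpoints lie in the same row. -/
def horizEdge {n m : ℕ} (e : Sym2 (Fin n × Fin m)) : Prop :=
  ∃ a b : Fin n × Fin m, e = s(a, b) ∧ a.1 = b.1

/-- An edge is vertical if its endpoints lie in the same column. -/
def vertEdge {n m : ℕ} (e : Sym2 (Fin n × Fin m)) : Prop :=
  ∃ a b : Fin n × Fin m, e = s(a, b) ∧ a.2 = b.2

/-- A cell is a turn-cell if it has an incident horizontal cycle edge and an
incident vertical cycle edge. -/
def IsTurnCell {n m : ℕ} {v₀ : Fin n × Fin m} (w : (gridGraph n m).Walk v₀ v₀)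
    (v : Fin n × Fin m) : Prop :=
  (∃ e ∈ w.edges, v ∈ e ∧ horizEdge e) ∧ (∃ e ∈ w.edges, v ∈ e ∧ vertEdge e)

/-- A cell is a straight-cell if all its incident cycle edges are horizontal,
or all are vertical. -/
def IsStraightCell {n m : ℕ} {v₀ : Fin n × Fin m} (w : (gridGraph n m).Walk v₀ v₀)
    (v : Fin n × Fin m) : Prop :=
  (∀ e ∈ w.edges, v ∈ e → horizEdge e) ∨ (∀ e ∈ w.edges, v ∈ e → vertEdge e)


section Grid

variable {n m : ℕ}

lemma horizEdge_mk {a b : Fin n × Fin m} : horizEdge s(a, b) ↔ a.1 = b.1 := by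
  constructor
  · rintro ⟨x, y, he, hxy⟩
    rw [Sym2.eq_iff] at he
    rcases he with ⟨rfl, rfl⟩ | ⟨rfl, rfl⟩
    · exact hxy
    · exact hxy.symm
  · intro h; exact ⟨a, b, rfl, h⟩

lemma vertEdge_mk {a b : Fin n × Fin m} : vertEdge s(a, b) ↔ a.2 = b.2 := by
  constructor
  · rintro ⟨x, y, he, hxy⟩
    rw [Sym2.eq_iff] at he
    rcases he with ⟨rfl, rfl⟩ | ⟨rfl, rfl⟩
    · exact hxy
    · exact hxy.symm
  · intro h; exact ⟨a, b, rfl, h⟩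

lemma grid_adj_cases {a b : Fin n × Fin m} (h : (gridGraph n m).Adj a b) :
    a ≠ b ∧ (a.1 = b.1 ∨ a.2 = b.2) := by
  rw [gridGraph, SimpleGraph.fromRel_adj] at h
  obtain ⟨hne, hrel⟩ := h
  refine ⟨hne, ?_⟩
  rcases hrel with (⟨h1, _⟩ | ⟨h1, _⟩) | (⟨h1, _⟩ | ⟨h1, _⟩)
  · exact Or.inl h1
  · exact Or.inr h1
  · exact Or.inl h1.symm
  · exact Or.inr h1.symm

lemma grid_adj_excl {a b : Fin n × Fin m} (h : (gridGraph n m).Adj a b) :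
    (a.1 = b.1 ↔ ¬ a.2 = b.2) := by
  obtain ⟨hne, hor⟩ := grid_adj_cases h
  constructor
  · intro h1 h2
    exact hne (Prod.ext h1 h2)
  · intro h2
    tauto

lemma grid_row_step {a b : Fin n × Fin m} (h : (gridGraph n m).Adj a b) :
    (a.1 : ℕ) = b.1 ∨ (a.1 : ℕ) + 1 = b.1 ∨ (b.1 : ℕ) + 1 = a.1 := by
  rw [gridGraph, SimpleGraph.fromRel_adj] at h
  rcases h.2 with (⟨h1, _⟩ | ⟨_, h2⟩) | (⟨h1, _⟩ | ⟨_, h2⟩)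
  · exact Or.inl (by rw [h1])
  · exact Or.inr (Or.inl h2)
  · exact Or.inl (by rw [h1])
  · exact Or.inr (Or.inr h2)

lemma grid_col_step {a b : Fin n × Fin m} (h : (gridGraph n m).Adj a b) :
    (a.2 : ℕ) = b.2 ∨ (a.2 : ℕ) + 1 = b.2 ∨ (b.2 : ℕ) + 1 = a.2 := by
  rw [gridGraph, SimpleGraph.fromRel_adj] at h
  rcases h.2 with (⟨_, h2⟩ | ⟨h1, _⟩) | (⟨_, h2⟩ | ⟨h1, _⟩)
  · exact Or.inr (Or.inl h2)
  · exact Or.inl (by rw [h1])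
  · exact Or.inr (Or.inr h2)
  · exact Or.inl (by rw [h1])

lemma grid_dart_edge (d : (gridGraph n m).Dart) : d.edge = s(d.fst, d.snd) := rfl

lemma turn_iff_aux {v₀ : Fin n × Fin m} (w : (gridGraph n m).Walk v₀ v₀)
    (v : Fin n × Fin m) (d₁ d₂ : (gridGraph n m).Dart)
    (h₁ : d₁ ∈ w.darts) (h₂ : d₂ ∈ w.darts) (hf : d₁.fst = v) (hs : d₂.snd = v)
    (u₁ : ∀ d ∈ w.darts, d.fst = v → d = d₁) (u₂ : ∀ d ∈ w.darts, d.snd = v → d = d₂) :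
    IsTurnCell w v ↔
      ((d₁.fst.1 = d₁.snd.1 ∨ d₂.fst.1 = d₂.snd.1) ∧
        (d₁.fst.2 = d₁.snd.2 ∨ d₂.fst.2 = d₂.snd.2)) := by
  have hedges : ∀ e ∈ w.edges, v ∈ e → e = d₁.edge ∨ e = d₂.edge := by
    intro e he hv
    rw [Walk.edges] at he
    obtain ⟨d, hd, rfl⟩ := List.mem_map.mp he
    rw [grid_dart_edge, Sym2.mem_iff] at hv
    rcases hv with hv | hv
    · exact Or.inl (by rw [u₁ d hd hv.symm])
    · exact Or.inr (by rw [u₂ d hd hv.symm])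
  have hm₁ : d₁.edge ∈ w.edges := by
    rw [Walk.edges]; exact List.mem_map_of_mem h₁
  have hm₂ : d₂.edge ∈ w.edges := by
    rw [Walk.edges]; exact List.mem_map_of_mem h₂
  have hv₁ : v ∈ d₁.edge := by
    rw [grid_dart_edge, Sym2.mem_iff]; exact Or.inl hf.symm
  have hv₂ : v ∈ d₂.edge := by
    rw [grid_dart_edge, Sym2.mem_iff]; exact Or.inr hs.symm
  have e₁h : horizEdge d₁.edge ↔ d₁.fst.1 = d₁.snd.1 := by rw [grid_dart_edge, horizEdge_mk]
  have e₂h : horizEdge d₂.edge ↔ d₂.fst.1 = d₂.snd.1 := by rw [grid_dart_edge, horizEdge_mk]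
  have e₁v : vertEdge d₁.edge ↔ d₁.fst.2 = d₁.snd.2 := by rw [grid_dart_edge, vertEdge_mk]
  have e₂v : vertEdge d₂.edge ↔ d₂.fst.2 = d₂.snd.2 := by rw [grid_dart_edge, vertEdge_mk]
  constructor
  · rintro ⟨⟨eh, hehm, hehv, heh⟩, ⟨ev, hevm, hevv, hev⟩⟩
    constructor
    · rcases hedges eh hehm hehv with rfl | rfl
      · exact Or.inl (e₁h.mp heh)
      · exact Or.inr (e₂h.mp heh)
    · rcases hedges ev hevm hevv with rfl | rfl
      · exact Or.inl (e₁v.mp hev)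
      · exact Or.inr (e₂v.mp hev)
  · rintro ⟨hh, hv⟩
    constructor
    · rcases hh with hh | hh
      · exact ⟨d₁.edge, hm₁, hv₁, e₁h.mpr hh⟩
      · exact ⟨d₂.edge, hm₂, hv₂, e₂h.mpr hh⟩
    · rcases hv with hv | hv
      · exact ⟨d₁.edge, hm₁, hv₁, e₁v.mpr hv⟩
      · exact ⟨d₂.edge, hm₂, hv₂, e₂v.mpr hv⟩

end Grid

/-- In any rook circuit, every row and every column contains an even number of
turn-cells. -/
theorem even_turns_in_rows_and_columns (n m : ℕ)
    (v₀ : Fin n × Fin m) (w : (gridGraph n m).Walk v₀ v₀)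
    (hw : w.IsHamiltonianCycle) :
    (∀ i : Fin n, Even {v : Fin n × Fin m | v.1 = i ∧ IsTurnCell w v}.ncard) ∧
    (∀ j : Fin m, Even {v : Fin n × Fin m | v.2 = j ∧ IsTurnCell w v}.ncard) := by
  classical
  constructor
  · intro i
    have := main_parity w hw (fun v => (v.1 : ℕ))
      (fun d hd => grid_row_step d.adj)
      (IsTurnCell w)
      (fun v d₁ h₁ d₂ h₂ hf hs u₁ u₂ => by
        rw [turn_iff_aux w v d₁ d₂ h₁ h₂ hf hs u₁ u₂]
        have x₁ := grid_adj_excl d₁.adj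
        have x₂ := grid_adj_excl d₂.adj
        simp only [Fin.val_eq_val]
        tauto)
      (i : ℕ)
    convert this using 2
    ext v
    simp [Fin.val_eq_val]
  · intro j
    have := main_parity w hw (fun v => (v.2 : ℕ))
      (fun d hd => grid_col_step d.adj)
      (IsTurnCell w)
      (fun v d₁ h₁ d₂ h₂ hf hs u₁ u₂ => by
        rw [turn_iff_aux w v d₁ d₂ h₁ h₂ hf hs u₁ u₂]
        have x₁ := grid_adj_excl d₁.adj
        have x₂ := grid_adj_excl d₂.adj
        simp only [Fin.val_eq_val]
        tauto)
      (j : ℕ)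
    convert this using 2
    ext v
    simp [Fin.val_eq_val]
end

section
/- In any rook circuit on a board with m columns, for each row let c, d, e, f be respectively the number of cells in that row with a counterclockwise turn, a clockwise turn, a horizontal straight, and a vertical straight. Then d + f is even, and consequently (c + e − d − f) ≡ m (mod 4). -/
/-- An oriented rook circuit: a permutation `next` of the cells which moves each
cell to an orthogonally adjacent cell and which consists of a single cycle
through all cells. -/
structure RookCircuit (n m : ℕ) where
  next : Equiv.Perm (Fin n × Fin m)
  adj : ∀ v, (gridGraph n m).Adj v (next v)
  single_cycle : ∀ u v : Fin n × Fin m, ∃ k : ℕ, (⇑next)^[k] u = v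

/-- The displacement vector from cell `a` to cell `b`, in coordinates where the
`x`-axis points to the right (increasing column) and the `y`-axis points up
(decreasing row). -/
def dirVec {n m : ℕ} (a b : Fin n × Fin m) : ℤ × ℤ :=
  (((b.2 : ℕ) : ℤ) - ((a.2 : ℕ) : ℤ), ((a.1 : ℕ) : ℤ) - ((b.1 : ℕ) : ℤ))

/-- Cross product of two planar integer vectors. -/
def cross2 (u v : ℤ × ℤ) : ℤ := u.1 * v.2 - u.2 * v.1

/-- The circuit makes a counter-clockwise (+90°) turn at `v`. -/
def CcwAt {n m : ℕ} (C : RookCircuit n m) (v : Fin n × Fin m) : Prop :=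
  cross2 (dirVec (C.next.symm v) v) (dirVec v (C.next v)) = 1

/-- The circuit makes a clockwise (−90°) turn at `v`. -/
def CwAt {n m : ℕ} (C : RookCircuit n m) (v : Fin n × Fin m) : Prop :=
  cross2 (dirVec (C.next.symm v) v) (dirVec v (C.next v)) = -1

/-- The circuit goes straight through `v` horizontally. -/
def HorizStraightAt {n m : ℕ} (C : RookCircuit n m) (v : Fin n × Fin m) : Prop :=
  dirVec (C.next.symm v) v = dirVec v (C.next v) ∧ (dirVec v (C.next v)).2 = 0

/-- The circuit goes straight through `v` vertically. -/
def VertStraightAt {n m : ℕ} (C : RookCircuit n m) (v : Fin n × Fin m) : Prop :=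
  dirVec (C.next.symm v) v = dirVec v (C.next v) ∧ (dirVec v (C.next v)).1 = 0

section RookAux

lemma rook_next_unit {n m : ℕ} (C : RookCircuit n m) (v : Fin n × Fin m) :
    dirVec v (C.next v) = (1,0) ∨ dirVec v (C.next v) = (-1,0) ∨
    dirVec v (C.next v) = (0,1) ∨ dirVec v (C.next v) = (0,-1) := by
  have h := C.adj v
  rw [gridGraph, SimpleGraph.fromRel_adj] at h
  obtain ⟨-, (⟨h1,h2⟩|⟨h1,h2⟩)|(⟨h1,h2⟩|⟨h1,h2⟩)⟩ := h <;>
    [left; (right;right;right); (right;left); (right;right;left)] <;>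
  · have := congrArg Fin.val h1
    simp only [dirVec, Prod.mk.injEq]
    omega

lemma rook_in_unit {n m : ℕ} (C : RookCircuit n m) (v : Fin n × Fin m) :
    dirVec (C.next.symm v) v = (1,0) ∨ dirVec (C.next.symm v) v = (-1,0) ∨
    dirVec (C.next.symm v) v = (0,1) ∨ dirVec (C.next.symm v) v = (0,-1) := by
  have := rook_next_unit C (C.next.symm v)
  rwa [C.next.apply_symm_apply] at this

lemma dirVec_left_inj {n m : ℕ} {a b v : Fin n × Fin m}
    (h : dirVec a v = dirVec b v) : a = b := by
  simp only [dirVec, Prod.mk.injEq] at h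
  obtain ⟨h1, h2⟩ := h
  have : (a.1 : ℕ) = b.1 ∧ (a.2 : ℕ) = b.2 := by omega
  exact Prod.ext (Fin.ext this.1) (Fin.ext this.2)

lemma dirVec_anti {n m : ℕ} (a b : Fin n × Fin m) : dirVec a b = - dirVec b a := by
  simp only [dirVec, Prod.neg_mk, Prod.mk.injEq]; constructor <;> ring

lemma cross2_neg_self (x : ℤ × ℤ) : cross2 (-x) x = 0 := by
  simp only [cross2, Prod.fst_neg, Prod.snd_neg]; ring

lemma rook_symm_ne_next {n m : ℕ} (C : RookCircuit n m)
    (hccw : {v : Fin n × Fin m | CcwAt C v}.ncard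
      = {v : Fin n × Fin m | CwAt C v}.ncard + 4) (v : Fin n × Fin m) :
    C.next.symm v ≠ C.next v := by
  intro hvw
  set w := C.next v with hw
  have hnw : C.next w = v := by rw [← hvw]; exact C.next.apply_symm_apply v
  have hall : ∀ u : Fin n × Fin m, u = v ∨ u = w := by
    intro u
    obtain ⟨j, hj⟩ := C.single_cycle v u
    have key : ∀ j : ℕ, (⇑C.next)^[j] v = v ∨ (⇑C.next)^[j] v = w := by
      intro j
      induction j with
      | zero => left; rfl
      | succ i ih =>
        rw [Function.iterate_succ_apply']
        rcases ih with h | h <;> rw [h]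
        · right; exact hw.symm
        · left; exact hnw
    rcases key j with h | h
    · left; rw [← hj, h]
    · right; rw [← hj, h]
  have hsymm : ∀ u : Fin n × Fin m, C.next.symm u = C.next u := by
    intro u
    rcases hall u with rfl | rfl
    · exact hvw
    · rw [hnw, Equiv.symm_apply_eq, hw]
  have hnone : ∀ u : Fin n × Fin m, ¬ CcwAt C u ∧ ¬ CwAt C u := by
    intro u
    have h1 : dirVec (C.next.symm u) u = - dirVec u (C.next u) := by
      rw [hsymm u]; exact dirVec_anti _ _
    constructor
    · intro h; rw [CcwAt, h1, cross2_neg_self] at h; exact one_ne_zero h.symm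
    · intro h; rw [CwAt, h1, cross2_neg_self] at h; norm_num at h
  have e1 : {v : Fin n × Fin m | CcwAt C v} = ∅ := by ext u; simp [(hnone u).1]
  have e2 : {v : Fin n × Fin m | CwAt C v} = ∅ := by ext u; simp [(hnone u).2]
  rw [e1, e2, Set.ncard_empty] at hccw
  omega

lemma rook_in_ne_neg_out {n m : ℕ} (C : RookCircuit n m)
    (hccw : {v : Fin n × Fin m | CcwAt C v}.ncard
      = {v : Fin n × Fin m | CwAt C v}.ncard + 4) (v : Fin n × Fin m) :
    dirVec (C.next.symm v) v ≠ - dirVec v (C.next v) := by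
  intro h
  apply rook_symm_ne_next C hccw v
  apply dirVec_left_inj (v := v)
  rw [h, ← dirVec_anti]

lemma classify_total (u w : ℤ × ℤ)
    (hu : u = (1,0) ∨ u = (-1,0) ∨ u = (0,1) ∨ u = (0,-1))
    (hw : w = (1,0) ∨ w = (-1,0) ∨ w = (0,1) ∨ w = (0,-1))
    (hne : u ≠ -w) :
    cross2 u w = 1 ∨ cross2 u w = -1 ∨ (u = w ∧ w.2 = 0) ∨ (u = w ∧ w.1 = 0) := by
  rcases hu with rfl|rfl|rfl|rfl <;> rcases hw with rfl|rfl|rfl|rfl <;>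
    first | (exact absurd (by decide) hne) | decide

lemma classify_excl (u w : ℤ × ℤ)
    (hu : u = (1,0) ∨ u = (-1,0) ∨ u = (0,1) ∨ u = (0,-1))
    (hw : w = (1,0) ∨ w = (-1,0) ∨ w = (0,1) ∨ w = (0,-1)) :
    (cross2 u w = 1 → ¬(cross2 u w = -1) ∧ ¬(u = w ∧ w.2 = 0) ∧ ¬(u = w ∧ w.1 = 0)) ∧
    (cross2 u w = -1 → ¬(u = w ∧ w.2 = 0) ∧ ¬(u = w ∧ w.1 = 0)) ∧
    ((u = w ∧ w.2 = 0) → ¬(u = w ∧ w.1 = 0)) := by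
  rcases hu with rfl|rfl|rfl|rfl <;> rcases hw with rfl|rfl|rfl|rfl <;> decide

lemma classify_xor (u w : ℤ × ℤ)
    (hu : u = (1,0) ∨ u = (-1,0) ∨ u = (0,1) ∨ u = (0,-1))
    (hw : w = (1,0) ∨ w = (-1,0) ∨ w = (0,1) ∨ w = (0,-1))
    (hne : u ≠ -w) :
    (cross2 u w = -1 ∨ (u = w ∧ w.1 = 0)) ↔
      (((u = (0,1) ∨ u = (-1,0)) ∧ ¬(w = (0,-1) ∨ w = (-1,0))) ∨
       ((w = (0,-1) ∨ w = (-1,0)) ∧ ¬(u = (0,1) ∨ u = (-1,0)))) := by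
  rcases hu with rfl|rfl|rfl|rfl <;> rcases hw with rfl|rfl|rfl|rfl <;>
    first | (exact absurd (by decide) hne) | decide

open Finset in
lemma perm_cut {α : Type*} [Fintype α] [DecidableEq α] (π : Equiv.Perm α)
    (p : α → Prop) [DecidablePred p] :
    (Finset.univ.filter (fun v => p v ∧ ¬ p (π v))).card
      = (Finset.univ.filter (fun v => ¬ p v ∧ p (π v))).card := by
  have key : (Finset.univ.filter (fun v => p (π v))).card
      = (Finset.univ.filter p).card := by
    apply Finset.card_bij (fun v _ => π v)
    · intro a ha; simp only [mem_filter, mem_univ, true_and] at ha ⊢; exact ha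
    · intro a _ b _ h; exact π.injective h
    · intro b hb
      refine ⟨π.symm b, ?_, π.apply_symm_apply b⟩
      simp only [mem_filter, mem_univ, true_and, Equiv.apply_symm_apply] at hb ⊢
      exact hb
  have h1 := Finset.card_filter_add_card_filter_not
      (s := Finset.univ.filter (fun v => p (π v))) (p := p)
  have h2 := Finset.card_filter_add_card_filter_not
      (s := Finset.univ.filter p) (p := fun v => p (π v))
  rw [Finset.filter_filter, Finset.filter_filter] at h1 h2
  have e1 : Finset.univ.filter (fun v => p (π v) ∧ p v)
      = Finset.univ.filter (fun v => p v ∧ p (π v)) := by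
    apply Finset.filter_congr; intro x _; exact and_comm
  have e2 : Finset.univ.filter (fun v => p (π v) ∧ ¬ p v)
      = Finset.univ.filter (fun v => ¬ p v ∧ p (π v)) := by
    apply Finset.filter_congr; intro x _; exact and_comm
  rw [e1, e2, key] at h1
  omega

lemma filter_split {α : Type*} [Fintype α] (p q : α → Prop)
    [DecidablePred p] [DecidablePred q] :
    (Finset.univ.filter p).card
      = (Finset.univ.filter (fun v => p v ∧ q v)).card
        + (Finset.univ.filter (fun v => p v ∧ ¬ q v)).card := by
  rw [← Finset.filter_filter, ← Finset.filter_filter,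
    Finset.card_filter_add_card_filter_not]

lemma filter_or_card {α : Type*} [Fintype α] [DecidableEq α] (p q : α → Prop)
    [DecidablePred p] [DecidablePred q] (h : ∀ v, ¬(p v ∧ q v)) :
    (Finset.univ.filter (fun v => p v ∨ q v)).card
      = (Finset.univ.filter p).card + (Finset.univ.filter q).card := by
  rw [Finset.filter_or]
  apply Finset.card_union_of_disjoint
  rw [Finset.disjoint_left]
  intro a ha hb
  simp only [Finset.mem_filter] at ha hb
  exact h a ⟨ha.2, hb.2⟩

end RookAux



/-- In a counter-clockwise oriented rook circuit on a board with `m` columns,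
let `c, d, e, f` be the numbers of cells in a given row with a
counter-clockwise turn, a clockwise turn, a horizontal straight, and a
vertical straight, respectively.  Then `d + f` is even and
`c + e - d - f ≡ m [ZMOD 4]`. -/
theorem row_turn_straight_invariant (n m : ℕ) (C : RookCircuit n m)
    (hccw : {v : Fin n × Fin m | CcwAt C v}.ncard
      = {v : Fin n × Fin m | CwAt C v}.ncard + 4)
    (k : Fin n)
    (c d e f : ℕ)
    (hc : c = {v : Fin n × Fin m | v.1 = k ∧ CcwAt C v}.ncard)
    (hd : d = {v : Fin n × Fin m | v.1 = k ∧ CwAt C v}.ncard)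
    (he : e = {v : Fin n × Fin m | v.1 = k ∧ HorizStraightAt C v}.ncard)
    (hf : f = {v : Fin n × Fin m | v.1 = k ∧ VertStraightAt C v}.ncard) :
    Even (d + f) ∧ ((c : ℤ) + e - d - f) ≡ (m : ℤ) [ZMOD 4] := by
  classical
  have hne := rook_in_ne_neg_out C hccw
  -- convert ncard to Finset card
  have conv : ∀ p : Fin n × Fin m → Prop, {v : Fin n × Fin m | v.1 = k ∧ p v}.ncard
      = (Finset.univ.filter (fun v : Fin n × Fin m => v.1 = k ∧ p v)).card := by
    intro p
    rw [← Set.ncard_coe_finset]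
    congr 1
    ext v; simp
  rw [conv] at hc hd he hf
  -- the row has m cells
  have hRow : (Finset.univ.filter (fun v : Fin n × Fin m => v.1 = k)).card = m := by
    have : (Finset.univ.filter (fun v : Fin n × Fin m => v.1 = k))
        = {k} ×ˢ (Finset.univ : Finset (Fin m)) := by
      ext v
      simp only [Finset.mem_filter, Finset.mem_univ, true_and, Finset.mem_product,
        Finset.mem_singleton, and_true]
    rw [this]; simp
  -- Step E : the four types partition the row
  have htot : ∀ v : Fin n × Fin m,
      CcwAt C v ∨ CwAt C v ∨ HorizStraightAt C v ∨ VertStraightAt C v := fun v =>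
    classify_total _ _ (rook_in_unit C v) (rook_next_unit C v) (hne v)
  have hsum : c + d + e + f = m := by
    have key := hRow
    have hcong : Finset.univ.filter (fun v : Fin n × Fin m => v.1 = k)
        = Finset.univ.filter (fun v : Fin n × Fin m =>
            (v.1 = k ∧ CcwAt C v) ∨ ((v.1 = k ∧ CwAt C v) ∨
            ((v.1 = k ∧ HorizStraightAt C v) ∨ (v.1 = k ∧ VertStraightAt C v)))) := by
      apply Finset.filter_congr
      intro v _
      have := htot v
      tauto
    rw [hcong] at key
    have hx : ∀ a : Fin n × Fin m, _ := fun a =>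
      classify_excl _ _ (rook_in_unit C a) (rook_next_unit C a)
    rw [filter_or_card _ _ (fun a hh => by
      rcases hh with ⟨⟨-, h1⟩, (⟨-, h2⟩|⟨-, h2⟩|⟨-, h2⟩)⟩
      · exact ((hx a).1 h1).1 h2
      · exact ((hx a).1 h1).2.1 h2
      · exact ((hx a).1 h1).2.2 h2)] at key
    rw [filter_or_card _ _ (fun a hh => by
      rcases hh with ⟨⟨-, h1⟩, (⟨-, h2⟩|⟨-, h2⟩)⟩
      · exact ((hx a).2.1 h1).1 h2
      · exact ((hx a).2.1 h1).2 h2)] at key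
    rw [filter_or_card _ _ (fun a hh => by
      rcases hh with ⟨⟨-, h1⟩, ⟨-, h2⟩⟩
      exact (hx a).2.2 h1 h2)] at key
    rw [hc, hd, he, hf]
    omega
  -- Step F : d + f is even
  -- cells of the row entered from below  =  cells of the row left downwards
  have hUD : (Finset.univ.filter (fun v : Fin n × Fin m =>
        v.1 = k ∧ dirVec (C.next.symm v) v = (0,1))).card
      = (Finset.univ.filter (fun v : Fin n × Fin m =>
        v.1 = k ∧ dirVec v (C.next v) = (0,-1))).card := by
    have hcut := perm_cut C.next (fun v : Fin n × Fin m => (v.1 : ℕ) ≤ (k : ℕ))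
    have E1 : Finset.univ.filter (fun v : Fin n × Fin m =>
          ((v.1 : ℕ) ≤ (k : ℕ)) ∧ ¬ (((C.next v).1 : ℕ) ≤ (k : ℕ)))
        = Finset.univ.filter (fun v : Fin n × Fin m =>
          v.1 = k ∧ dirVec v (C.next v) = (0,-1)) := by
      apply Finset.filter_congr
      intro v _
      constructor
      · rintro ⟨h1, h2⟩
        rcases rook_next_unit C v with h|h|h|h
        · exfalso; simp only [dirVec, Prod.mk.injEq] at h; omega
        · exfalso; simp only [dirVec, Prod.mk.injEq] at h; omega
        · exfalso; simp only [dirVec, Prod.mk.injEq] at h; omega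
        · have h' := h; simp only [dirVec, Prod.mk.injEq] at h'
          exact ⟨Fin.ext (by omega), h⟩
      · rintro ⟨h1, h2⟩
        simp only [dirVec, Prod.mk.injEq] at h2
        have h1' := congrArg Fin.val h1
        exact ⟨by omega, by omega⟩
    have E2 : Finset.univ.filter (fun v : Fin n × Fin m =>
          ¬ ((v.1 : ℕ) ≤ (k : ℕ)) ∧ (((C.next v).1 : ℕ) ≤ (k : ℕ)))
        = Finset.univ.filter (fun v : Fin n × Fin m =>
          ((v.1 : ℕ) = (k : ℕ) + 1) ∧ dirVec v (C.next v) = (0,1)) := by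
      apply Finset.filter_congr
      intro v _
      constructor
      · rintro ⟨h1, h2⟩
        rcases rook_next_unit C v with h|h|h|h
        · exfalso; simp only [dirVec, Prod.mk.injEq] at h; omega
        · exfalso; simp only [dirVec, Prod.mk.injEq] at h; omega
        · have h' := h; simp only [dirVec, Prod.mk.injEq] at h'
          exact ⟨by omega, h⟩
        · exfalso; simp only [dirVec, Prod.mk.injEq] at h; omega
      · rintro ⟨h1, h2⟩
        simp only [dirVec, Prod.mk.injEq] at h2
        exact ⟨by omega, by omega⟩
    have E3 : (Finset.univ.filter (fun v : Fin n × Fin m =>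
          ((v.1 : ℕ) = (k : ℕ) + 1) ∧ dirVec v (C.next v) = (0,1))).card
        = (Finset.univ.filter (fun v : Fin n × Fin m =>
          v.1 = k ∧ dirVec (C.next.symm v) v = (0,1))).card := by
      apply Finset.card_bij (fun v _ => C.next v)
      · intro a ha
        simp only [Finset.mem_filter, Finset.mem_univ, true_and] at ha ⊢
        obtain ⟨h1, h2⟩ := ha
        have h2' := h2; simp only [dirVec, Prod.mk.injEq] at h2'
        refine ⟨Fin.ext (by omega), ?_⟩
        rw [C.next.symm_apply_apply]
        exact h2
      · intro a _ b _ h; exact C.next.injective h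
      · intro b hb
        simp only [Finset.mem_filter, Finset.mem_univ, true_and] at hb
        obtain ⟨h1, h2⟩ := hb
        refine ⟨C.next.symm b, ?_, C.next.apply_symm_apply b⟩
        simp only [Finset.mem_filter, Finset.mem_univ, true_and]
        have h2' := h2; simp only [dirVec, Prod.mk.injEq] at h2'
        have h1' := congrArg Fin.val h1
        refine ⟨by omega, ?_⟩
        rw [C.next.apply_symm_apply]
        exact h2
    rw [← E3, ← E2, ← hcut, E1]
  -- cells entered from the right = cells left to the left
  have hL : (Finset.univ.filter (fun v : Fin n × Fin m =>
        v.1 = k ∧ dirVec (C.next.symm v) v = (-1,0))).card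
      = (Finset.univ.filter (fun v : Fin n × Fin m =>
        v.1 = k ∧ dirVec v (C.next v) = (-1,0))).card := by
    apply Finset.card_bij (fun v _ => C.next.symm v)
    · intro a ha
      simp only [Finset.mem_filter, Finset.mem_univ, true_and] at ha ⊢
      obtain ⟨h1, h2⟩ := ha
      have h2' := h2; simp only [dirVec, Prod.mk.injEq] at h2'
      have h1' := congrArg Fin.val h1
      refine ⟨Fin.ext (by omega), ?_⟩
      rw [C.next.apply_symm_apply]
      exact h2
    · intro a _ b _ h; exact C.next.symm.injective h
    · intro b hb
      simp only [Finset.mem_filter, Finset.mem_univ, true_and] at hb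
      obtain ⟨h1, h2⟩ := hb
      refine ⟨C.next b, ?_, C.next.symm_apply_apply b⟩
      simp only [Finset.mem_filter, Finset.mem_univ, true_and]
      have h2' := h2; simp only [dirVec, Prod.mk.injEq] at h2'
      have h1' := congrArg Fin.val h1
      refine ⟨Fin.ext (by omega), ?_⟩
      rw [C.next.symm_apply_apply]
      exact h2
  -- P/Q counts
  have hnP : (Finset.univ.filter (fun v : Fin n × Fin m =>
        v.1 = k ∧ (dirVec (C.next.symm v) v = (0,1) ∨ dirVec (C.next.symm v) v = (-1,0)))).card
      = (Finset.univ.filter (fun v : Fin n × Fin m =>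
        v.1 = k ∧ dirVec (C.next.symm v) v = (0,1))).card
      + (Finset.univ.filter (fun v : Fin n × Fin m =>
        v.1 = k ∧ dirVec (C.next.symm v) v = (-1,0))).card := by
    have hcong : Finset.univ.filter (fun v : Fin n × Fin m =>
          v.1 = k ∧ (dirVec (C.next.symm v) v = (0,1) ∨ dirVec (C.next.symm v) v = (-1,0)))
        = Finset.univ.filter (fun v : Fin n × Fin m =>
          (v.1 = k ∧ dirVec (C.next.symm v) v = (0,1))
            ∨ (v.1 = k ∧ dirVec (C.next.symm v) v = (-1,0))) := by
      apply Finset.filter_congr; intro v _; tauto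
    rw [hcong]
    apply filter_or_card
    rintro a ⟨⟨-, h1⟩, ⟨-, h2⟩⟩
    have : ((0,1) : ℤ × ℤ) = (-1,0) := by rw [← h1, h2]
    exact absurd this (by decide)
  have hnQ : (Finset.univ.filter (fun v : Fin n × Fin m =>
        v.1 = k ∧ (dirVec v (C.next v) = (0,-1) ∨ dirVec v (C.next v) = (-1,0)))).card
      = (Finset.univ.filter (fun v : Fin n × Fin m =>
        v.1 = k ∧ dirVec v (C.next v) = (0,-1))).card
      + (Finset.univ.filter (fun v : Fin n × Fin m =>
        v.1 = k ∧ dirVec v (C.next v) = (-1,0))).card := by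
    have hcong : Finset.univ.filter (fun v : Fin n × Fin m =>
          v.1 = k ∧ (dirVec v (C.next v) = (0,-1) ∨ dirVec v (C.next v) = (-1,0)))
        = Finset.univ.filter (fun v : Fin n × Fin m =>
          (v.1 = k ∧ dirVec v (C.next v) = (0,-1))
            ∨ (v.1 = k ∧ dirVec v (C.next v) = (-1,0))) := by
      apply Finset.filter_congr; intro v _; tauto
    rw [hcong]
    apply filter_or_card
    rintro a ⟨⟨-, h1⟩, ⟨-, h2⟩⟩
    have : ((0,-1) : ℤ × ℤ) = (-1,0) := by rw [← h1, h2]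
    exact absurd this (by decide)
  have hPQ : (Finset.univ.filter (fun v : Fin n × Fin m =>
        v.1 = k ∧ (dirVec (C.next.symm v) v = (0,1) ∨ dirVec (C.next.symm v) v = (-1,0)))).card
      = (Finset.univ.filter (fun v : Fin n × Fin m =>
        v.1 = k ∧ (dirVec v (C.next v) = (0,-1) ∨ dirVec v (C.next v) = (-1,0)))).card := by
    rw [hnP, hnQ, hUD, hL]
  -- splits of the P- and Q-sets
  have hsplitP := filter_split (fun v : Fin n × Fin m =>
      v.1 = k ∧ (dirVec (C.next.symm v) v = (0,1) ∨ dirVec (C.next.symm v) v = (-1,0)))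
    (fun v : Fin n × Fin m => dirVec v (C.next v) = (0,-1) ∨ dirVec v (C.next v) = (-1,0))
  have hsplitQ := filter_split (fun v : Fin n × Fin m =>
      v.1 = k ∧ (dirVec v (C.next v) = (0,-1) ∨ dirVec v (C.next v) = (-1,0)))
    (fun v : Fin n × Fin m => dirVec (C.next.symm v) v = (0,1) ∨ dirVec (C.next.symm v) v = (-1,0))
  have hcomm : Finset.univ.filter (fun v : Fin n × Fin m =>
        (v.1 = k ∧ (dirVec (C.next.symm v) v = (0,1) ∨ dirVec (C.next.symm v) v = (-1,0)))
          ∧ (dirVec v (C.next v) = (0,-1) ∨ dirVec v (C.next v) = (-1,0)))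
      = Finset.univ.filter (fun v : Fin n × Fin m =>
        (v.1 = k ∧ (dirVec v (C.next v) = (0,-1) ∨ dirVec v (C.next v) = (-1,0)))
          ∧ (dirVec (C.next.symm v) v = (0,1) ∨ dirVec (C.next.symm v) v = (-1,0))) := by
    apply Finset.filter_congr; intro v _; tauto
  have hxeq : (Finset.univ.filter (fun v : Fin n × Fin m =>
        (v.1 = k ∧ (dirVec (C.next.symm v) v = (0,1) ∨ dirVec (C.next.symm v) v = (-1,0)))
          ∧ ¬ (dirVec v (C.next v) = (0,-1) ∨ dirVec v (C.next v) = (-1,0)))).card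
      = (Finset.univ.filter (fun v : Fin n × Fin m =>
        (v.1 = k ∧ (dirVec v (C.next v) = (0,-1) ∨ dirVec v (C.next v) = (-1,0)))
          ∧ ¬ (dirVec (C.next.symm v) v = (0,1) ∨ dirVec (C.next.symm v) v = (-1,0)))).card := by
    rw [hcomm] at hsplitP
    omega
  -- d + f as the symmetric difference count
  have hdf : d + f
      = (Finset.univ.filter (fun v : Fin n × Fin m =>
          (v.1 = k ∧ (dirVec (C.next.symm v) v = (0,1) ∨ dirVec (C.next.symm v) v = (-1,0)))
            ∧ ¬ (dirVec v (C.next v) = (0,-1) ∨ dirVec v (C.next v) = (-1,0)))).card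
      + (Finset.univ.filter (fun v : Fin n × Fin m =>
          (v.1 = k ∧ (dirVec v (C.next v) = (0,-1) ∨ dirVec v (C.next v) = (-1,0)))
            ∧ ¬ (dirVec (C.next.symm v) v = (0,1) ∨ dirVec (C.next.symm v) v = (-1,0)))).card := by
    rw [hd, hf]
    have hx : ∀ a : Fin n × Fin m, _ := fun a =>
      classify_excl _ _ (rook_in_unit C a) (rook_next_unit C a)
    have step1 : (Finset.univ.filter (fun v : Fin n × Fin m => v.1 = k ∧ CwAt C v)).card
        + (Finset.univ.filter (fun v : Fin n × Fin m => v.1 = k ∧ VertStraightAt C v)).card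
        = (Finset.univ.filter (fun v : Fin n × Fin m =>
            (v.1 = k ∧ CwAt C v) ∨ (v.1 = k ∧ VertStraightAt C v))).card := by
      rw [filter_or_card _ _ (fun a hh => by
        rcases hh with ⟨⟨-, h1⟩, ⟨-, h2⟩⟩
        exact ((hx a).2.1 h1).2 h2)]
    rw [step1]
    have hcong2 : Finset.univ.filter (fun v : Fin n × Fin m =>
          (v.1 = k ∧ CwAt C v) ∨ (v.1 = k ∧ VertStraightAt C v))
        = Finset.univ.filter (fun v : Fin n × Fin m =>
          ((v.1 = k ∧ (dirVec (C.next.symm v) v = (0,1) ∨ dirVec (C.next.symm v) v = (-1,0)))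
            ∧ ¬ (dirVec v (C.next v) = (0,-1) ∨ dirVec v (C.next v) = (-1,0)))
          ∨ ((v.1 = k ∧ (dirVec v (C.next v) = (0,-1) ∨ dirVec v (C.next v) = (-1,0)))
            ∧ ¬ (dirVec (C.next.symm v) v = (0,1) ∨ dirVec (C.next.symm v) v = (-1,0)))) := by
      apply Finset.filter_congr
      intro v _
      have hxv := classify_xor _ _ (rook_in_unit C v) (rook_next_unit C v) (hne v)
      simp only [CwAt, VertStraightAt]
      constructor
      · rintro (⟨hk, h⟩ | ⟨hk, h⟩)
        · rcases hxv.mp (Or.inl h) with ⟨hp, hq⟩ | ⟨hq, hp⟩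
          · exact Or.inl ⟨⟨hk, hp⟩, hq⟩
          · exact Or.inr ⟨⟨hk, hq⟩, hp⟩
        · rcases hxv.mp (Or.inr h) with ⟨hp, hq⟩ | ⟨hq, hp⟩
          · exact Or.inl ⟨⟨hk, hp⟩, hq⟩
          · exact Or.inr ⟨⟨hk, hq⟩, hp⟩
      · rintro (⟨⟨hk, hp⟩, hq⟩ | ⟨⟨hk, hq⟩, hp⟩)
        · rcases hxv.mpr (Or.inl ⟨hp, hq⟩) with h | h
          · exact Or.inl ⟨hk, h⟩
          · exact Or.inr ⟨hk, h⟩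
        · rcases hxv.mpr (Or.inr ⟨hq, hp⟩) with h | h
          · exact Or.inl ⟨hk, h⟩
          · exact Or.inr ⟨hk, h⟩
    rw [hcong2]
    apply filter_or_card
    rintro a ⟨⟨⟨-, hp⟩, -⟩, ⟨⟨-, -⟩, hp'⟩⟩
    exact hp' hp
  have heven : Even (d + f) := by
    rw [hdf, hxeq]
    exact ⟨_, rfl⟩
  refine ⟨heven, ?_⟩
  rw [Int.modEq_iff_dvd]
  obtain ⟨t, ht⟩ := heven
  omega
end

section
/- In any rook circuit on an n × m board with n odd and m even, where the board has an odd number n of columns, no row consists entirely of straight-cells; hence every row contains at least two turn-cells. -/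
/- ### Auxiliary material -/

attribute [local instance] Classical.propDecidable

namespace RookAux

open SimpleGraph

variable {V : Type*} [DecidableEq V] {G : SimpleGraph V}

lemma path_countP_end {u v : V} (p : G.Walk u v) (hp : p.IsPath) (h : u ≠ v) :
    p.edges.countP (fun e => decide (v ∈ e)) = 1 := by
  induction p with
  | nil => exact absurd rfl h
  | @cons x y z h' q ih =>
    rw [SimpleGraph.Walk.edges_cons, List.countP_cons]
    by_cases hy : y = z
    · subst hy
      have hq : q = SimpleGraph.Walk.nil := (SimpleGraph.Walk.isPath_iff_eq_nil (p := q)).mp hp.of_cons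
      subst hq
      simp
    · have h1 : q.edges.countP (fun e => decide (z ∈ e)) = 1 := ih hp.of_cons hy
      have : z ∉ s(x,y) := by
        rw [Sym2.mem_iff]
        push_neg
        exact ⟨Ne.symm h, Ne.symm hy⟩
      simp [h1, this]

lemma cycle_countP_incident {u v : V} (w : G.Walk v v) (hc : w.IsCycle) (hu : u ∈ w.support) :
    w.edges.countP (fun e => decide (u ∈ e)) = 2 := by
  have hrot := (SimpleGraph.Walk.rotate_edges w u hu).perm.countP_eq (fun e => decide (u ∈ e))
  rw [← hrot]
  have hc' : (w.rotate u hu).IsCycle := hc.rotate hu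
  generalize (w.rotate u hu) = c at hc'
  cases c with
  | nil => exact absurd rfl hc'.ne_nil
  | @cons _ y _ h' q =>
    rw [SimpleGraph.Walk.cons_isCycle_iff] at hc'
    rw [SimpleGraph.Walk.edges_cons, List.countP_cons]
    rw [path_countP_end q hc'.1 h'.ne']
    simp

lemma walk_cross_parity (S : V → Prop) {u v : V} (p : G.Walk u v) :
    Even (p.darts.countP (fun d => decide (¬(S d.toProd.1 ↔ S d.toProd.2)))) ↔ (S u ↔ S v) := by
  induction p with
  | nil => simp
  | @cons a b c h' q ih =>
    rw [SimpleGraph.Walk.darts_cons, List.countP_cons]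
    by_cases hab : S a ↔ S b
    · rw [if_neg (by simp [hab]), Nat.add_zero, ih]
      tauto
    · rw [if_pos (by simp [hab]), Nat.even_add_one, ih]
      tauto

lemma edge_inc {e : Sym2 V} (he : e ∈ G.edgeSet) {v : V} (hv : v ∈ e) :
    ∃ u, e = s(v, u) ∧ G.Adj v u := by
  induction e using Sym2.ind with
  | _ a b =>
    rw [SimpleGraph.mem_edgeSet] at he
    rw [Sym2.mem_iff] at hv
    rcases hv with rfl | rfl
    · exact ⟨b, rfl, he⟩
    · exact ⟨a, Sym2.eq_swap, he.symm⟩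

lemma card_filter_countP {α : Type*} [DecidableEq α] {l : List α} (h : l.Nodup)
    (P : α → Prop) [DecidablePred P] :
    (l.toFinset.filter P).card = l.countP (fun a => decide (P a)) := by
  rw [List.countP_eq_length_filter, ← List.toFinset_card_of_nodup (h.filter _),
    List.toFinset_filter]
  congr 1
  ext x
  simp

lemma exists_ne_of_card_two {α : Type*} {F : Finset α} (h : F.card = 2) (c : α) :
    ∃ x ∈ F, x ≠ c := by
  obtain ⟨a, ha, b, hb, hab⟩ := Finset.one_lt_card.mp (h ▸ Nat.one_lt_two)
  by_cases hac : a = c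
  · exact ⟨b, hb, by rintro rfl; exact hab hac⟩
  · exact ⟨a, ha, hac⟩

/- grid lemmas: `R` rows, `C` columns -/

lemma horizEdge_pair {R C : ℕ} (a b : Fin R × Fin C) : horizEdge s(a,b) ↔ a.1 = b.1 := by
  constructor
  · rintro ⟨a', b', he, hr⟩
    rw [Sym2.eq_iff] at he
    rcases he with ⟨rfl, rfl⟩ | ⟨rfl, rfl⟩
    · exact hr
    · exact hr.symm
  · exact fun h => ⟨a, b, rfl, h⟩

lemma vertEdge_pair {R C : ℕ} (a b : Fin R × Fin C) : vertEdge s(a,b) ↔ a.2 = b.2 := by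
  constructor
  · rintro ⟨a', b', he, hr⟩
    rw [Sym2.eq_iff] at he
    rcases he with ⟨rfl, rfl⟩ | ⟨rfl, rfl⟩
    · exact hr
    · exact hr.symm
  · exact fun h => ⟨a, b, rfl, h⟩

lemma grid_adj {R C : ℕ} {a b : Fin R × Fin C} : (gridGraph R C).Adj a b ↔ a ≠ b ∧
    ((a.1 = b.1 ∧ ((a.2:ℕ)+1 = b.2 ∨ (b.2:ℕ)+1 = a.2)) ∨
     (a.2 = b.2 ∧ ((a.1:ℕ)+1 = b.1 ∨ (b.1:ℕ)+1 = a.1))) := by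
  show (SimpleGraph.fromRel _).Adj a b ↔ _
  rw [SimpleGraph.fromRel_adj]
  constructor
  · rintro ⟨hne, h | h⟩ <;> exact ⟨hne, by tauto⟩
  · rintro ⟨hne, h⟩
    refine ⟨hne, ?_⟩
    rcases h with ⟨h1, h2 | h2⟩ | ⟨h1, h2 | h2⟩
    · exact Or.inl (Or.inl ⟨h1, h2⟩)
    · exact Or.inr (Or.inl ⟨h1.symm, h2⟩)
    · exact Or.inl (Or.inr ⟨h1, h2⟩)
    · exact Or.inr (Or.inr ⟨h1.symm, h2⟩)

lemma grid_edge_dich {R C : ℕ} {e : Sym2 (Fin R × Fin C)}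
    (he : e ∈ (gridGraph R C).edgeSet) :
    (horizEdge e ∧ ¬ vertEdge e) ∨ (vertEdge e ∧ ¬ horizEdge e) := by
  induction e using Sym2.ind with
  | _ a b =>
    rw [SimpleGraph.mem_edgeSet, grid_adj] at he
    obtain ⟨hne, h⟩ := he
    rcases h with ⟨h1, h2⟩ | ⟨h1, h2⟩
    · refine Or.inl ⟨(horizEdge_pair a b).mpr h1, fun hv => ?_⟩
      rw [vertEdge_pair] at hv
      omega
    · refine Or.inr ⟨(vertEdge_pair a b).mpr h1, fun hv => ?_⟩
      rw [horizEdge_pair] at hv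
      omega

/-- The crossing predicate for the horizontal cut below row `k`. -/
def crossE {R C : ℕ} (k : ℕ) (e : Sym2 (Fin R × Fin C)) : Prop :=
  ∃ a b : Fin R × Fin C, e = s(a, b) ∧ (a.1 : ℕ) = k ∧ (b.1 : ℕ) = k + 1

lemma crossE_pair {R C : ℕ} (k : ℕ) (a b : Fin R × Fin C) :
    crossE k s(a,b) ↔ ((a.1:ℕ) = k ∧ (b.1:ℕ) = k+1) ∨ ((b.1:ℕ) = k ∧ (a.1:ℕ) = k+1) := by
  constructor
  · rintro ⟨a', b', he, h1, h2⟩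
    rw [Sym2.eq_iff] at he
    rcases he with ⟨rfl, rfl⟩ | ⟨rfl, rfl⟩ <;> tauto
  · rintro (⟨h1, h2⟩ | ⟨h1, h2⟩)
    · exact ⟨a, b, rfl, h1, h2⟩
    · exact ⟨b, a, Sym2.eq_swap, h1, h2⟩


lemma crossE_ne {R C : ℕ} {e : Sym2 (Fin R × Fin C)} {k l : ℕ} (hkl : k ≠ l)
    (h1 : crossE k e) (h2 : crossE l e) : False := by
  induction e using Sym2.ind with
  | _ a b =>
    rw [crossE_pair] at h1 h2
    omega

lemma vert_inc_iff {R C : ℕ} {a b : Fin R × Fin C} (hadj : (gridGraph R C).Adj a b) (i : Fin R) :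
    (vertEdge s(a,b) ∧ ∃ j : Fin C, ((i,j) : Fin R × Fin C) ∈ s(a,b)) ↔
      (crossE (i:ℕ) s(a,b) ∨ ((i:ℕ) ≠ 0 ∧ crossE ((i:ℕ)-1) s(a,b))) := by
  have hmem : (∃ j : Fin C, ((i,j) : Fin R × Fin C) ∈ s(a,b)) ↔ a.1 = i ∨ b.1 = i := by
    constructor
    · rintro ⟨j, hj⟩
      rw [Sym2.mem_iff] at hj
      rcases hj with h | h
      · exact Or.inl (congrArg Prod.fst h).symm
      · exact Or.inr (congrArg Prod.fst h).symm
    · rintro (h | h)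
      · exact ⟨a.2, by rw [Sym2.mem_iff]; exact Or.inl (Prod.ext h.symm rfl)⟩
      · exact ⟨b.2, by rw [Sym2.mem_iff]; exact Or.inr (Prod.ext h.symm rfl)⟩
  rw [grid_adj] at hadj
  obtain ⟨hne, hor⟩ := hadj
  have hne2 : (a.1:ℕ) ≠ b.1 ∨ (a.2:ℕ) ≠ b.2 := by
    by_contra hc
    push_neg at hc
    exact hne (Prod.ext (Fin.ext hc.1) (Fin.ext hc.2))
  rw [hmem, vertEdge_pair, crossE_pair, crossE_pair]
  simp only [Fin.ext_iff] at hor ⊢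
  omega

lemma sum_inc_row {R C : ℕ} {a b : Fin R × Fin C} (hadj : (gridGraph R C).Adj a b)
    (hv : vertEdge s(a,b)) (i : Fin R) :
    (∑ j : Fin C, if (((i,j) : Fin R × Fin C) ∈ s(a,b)) then 1 else 0) =
      if (∃ j : Fin C, ((i,j) : Fin R × Fin C) ∈ s(a,b)) then 1 else 0 := by
  rw [vertEdge_pair] at hv
  rw [grid_adj] at hadj
  have hr : a.1 ≠ b.1 := by
    intro hc
    exact hadj.1 (Prod.ext hc hv)
  simp_rw [Sym2.mem_iff]
  by_cases hia : a.1 = i <;> by_cases hib : b.1 = i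
  · exact absurd (hia.trans hib.symm) hr
  · have hconv : ∀ j : Fin C, ((i,j) = a ∨ (i,j) = b) ↔ j = a.2 := by
      intro j
      constructor
      · rintro (h | h)
        · exact (congrArg Prod.snd h)
        · exact absurd (congrArg Prod.fst h).symm hib
      · rintro rfl
        exact Or.inl (Prod.ext hia.symm rfl)
    rw [Finset.sum_congr rfl (fun j _ => if_congr (hconv j) rfl rfl),
      if_pos ⟨a.2, (hconv a.2).mpr rfl⟩]
    simp
  · have hconv : ∀ j : Fin C, ((i,j) = a ∨ (i,j) = b) ↔ j = b.2 := by
      intro j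
      constructor
      · rintro (h | h)
        · exact absurd (congrArg Prod.fst h).symm hia
        · exact (congrArg Prod.snd h)
      · rintro rfl
        exact Or.inr (Prod.ext hib.symm rfl)
    rw [Finset.sum_congr rfl (fun j _ => if_congr (hconv j) rfl rfl),
      if_pos ⟨b.2, (hconv b.2).mpr rfl⟩]
    simp
  · have hconv : ∀ j : Fin C, ¬((i,j) = a ∨ (i,j) = b) := by
      rintro j (h | h)
      · exact hia (congrArg Prod.fst h).symm
      · exact hib (congrArg Prod.fst h).symm
    rw [Finset.sum_congr rfl (fun j _ => if_neg (hconv j)),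
      if_neg (by rintro ⟨j, hj⟩; exact hconv j hj)]
    simp

lemma sum_inc_row' {R C : ℕ} {e : Sym2 (Fin R × Fin C)} (he : e ∈ (gridGraph R C).edgeSet)
    (i : Fin R) :
    (∑ j : Fin C, if (((i,j) : Fin R × Fin C) ∈ e ∧ vertEdge e) then 1 else 0) =
      if (vertEdge e ∧ ∃ j : Fin C, ((i,j) : Fin R × Fin C) ∈ e) then 1 else 0 := by
  induction e using Sym2.ind with
  | _ a b =>
    by_cases hv : vertEdge s(a,b)
    · simp only [hv, and_true, true_and]
      exact sum_inc_row ((SimpleGraph.mem_edgeSet _).mp he) hv i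
    · simp [hv]

end RookAux

/-- In any rook circuit on a board with `m` rows each of odd length `n`
(`n` columns), no row consists entirely of straight-cells; hence every row
contains at least two turn-cells. -/
theorem odd_row_length_two_turns (n m : ℕ) (hn : Odd n) (hm : Even m)
    (v₀ : Fin m × Fin n) (w : (gridGraph m n).Walk v₀ v₀)
    (hw : w.IsHamiltonianCycle) :
    ∀ i : Fin m,
      (¬ ∀ v : Fin m × Fin n, v.1 = i → IsStraightCell w v) ∧
      2 ≤ {v : Fin m × Fin n | v.1 = i ∧ IsTurnCell w v}.ncard := by
  have hcyc : w.IsCycle := hw.isCycle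
  have hnd : w.edges.Nodup := hcyc.edges_nodup
  set E : Finset (Sym2 (Fin m × Fin n)) := w.edges.toFinset with hEdef
  have hmemE : ∀ {e}, e ∈ E ↔ e ∈ w.edges := fun {e} => List.mem_toFinset
  have hEedge : ∀ e ∈ E, e ∈ (gridGraph m n).edgeSet :=
    fun e he => w.edges_subset_edgeSet (hmemE.mp he)
  have hdeg : ∀ v : Fin m × Fin n, (E.filter (fun e => v ∈ e)).card = 2 := by
    intro v
    rw [hEdef, @RookAux.card_filter_countP _ _ _ hnd (fun e : Sym2 (Fin m × Fin n) => v ∈ e)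
      (fun a => Sym2.Mem.decidable v a)]
    exact RookAux.cycle_countP_incident w hcyc (hw.mem_support v)
  set vdeg : (Fin m × Fin n) → ℕ :=
    fun v => (E.filter (fun e => v ∈ e ∧ vertEdge e)).card with hvdegdef
  have hsplitdeg : ∀ v : Fin m × Fin n,
      vdeg v + (E.filter (fun e => v ∈ e ∧ horizEdge e)).card = 2 := by
    intro v
    rw [← hdeg v]
    have hU : E.filter (fun e => v ∈ e) =
        E.filter (fun e => v ∈ e ∧ vertEdge e) ∪ E.filter (fun e => v ∈ e ∧ horizEdge e) := by
      ext e
      simp only [Finset.mem_filter, Finset.mem_union]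
      constructor
      · rintro ⟨he, hv⟩
        rcases RookAux.grid_edge_dich (hEedge e he) with ⟨hh, _⟩ | ⟨hv2, _⟩
        · exact Or.inr ⟨he, hv, hh⟩
        · exact Or.inl ⟨he, hv, hv2⟩
      · rintro (⟨he, hv, _⟩ | ⟨he, hv, _⟩) <;> exact ⟨he, hv⟩
    have hD : Disjoint (E.filter (fun e => v ∈ e ∧ vertEdge e))
        (E.filter (fun e => v ∈ e ∧ horizEdge e)) := by
      rw [Finset.disjoint_left]
      intro e h1 h2
      simp only [Finset.mem_filter] at h1 h2
      rcases RookAux.grid_edge_dich (hEedge e h1.1) with ⟨_, hnv⟩ | ⟨_, hnh⟩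
      · exact hnv h1.2.2
      · exact hnh h2.2.2
    rw [hU, Finset.card_union_of_disjoint hD]
  have hvle : ∀ v, vdeg v ≤ 2 := fun v => by have := hsplitdeg v; omega
  have hturn_iff : ∀ v : Fin m × Fin n, IsTurnCell w v ↔ vdeg v = 1 := by
    intro v
    constructor
    · rintro ⟨⟨eh, heh, hvh, hh⟩, ev, hev, hvv, hvert⟩
      have h1 : ev ∈ E.filter (fun e => v ∈ e ∧ vertEdge e) :=
        Finset.mem_filter.mpr ⟨hmemE.mpr hev, hvv, hvert⟩
      have h2 : eh ∈ E.filter (fun e => v ∈ e ∧ horizEdge e) :=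
        Finset.mem_filter.mpr ⟨hmemE.mpr heh, hvh, hh⟩
      have c1 : 0 < vdeg v := Finset.card_pos.mpr ⟨ev, h1⟩
      have c2 : 0 < (E.filter (fun e => v ∈ e ∧ horizEdge e)).card := Finset.card_pos.mpr ⟨eh, h2⟩
      have := hsplitdeg v
      omega
    · intro h1
      have h2 : 0 < (E.filter (fun e => v ∈ e ∧ horizEdge e)).card := by
        have := hsplitdeg v; omega
      obtain ⟨ev, hev⟩ := Finset.card_pos.mp (show 0 < vdeg v by omega)
      obtain ⟨eh, heh⟩ := Finset.card_pos.mp h2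
      simp only [Finset.mem_filter] at hev heh
      exact ⟨⟨eh, hmemE.mp heh.1, heh.2⟩, ⟨ev, hmemE.mp hev.1, hev.2⟩⟩
  have hns_turn : ∀ v : Fin m × Fin n, ¬ IsStraightCell w v → IsTurnCell w v := by
    intro v hns
    rw [IsStraightCell] at hns
    push_neg at hns
    obtain ⟨⟨e1, he1, hv1, hnh⟩, e2, he2, hv2, hnv⟩ := hns
    constructor
    · refine ⟨e2, he2, hv2, ?_⟩
      rcases RookAux.grid_edge_dich (w.edges_subset_edgeSet he2) with ⟨hh, _⟩ | ⟨hv, _⟩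
      · exact hh
      · exact absurd hv hnv
    · refine ⟨e1, he1, hv1, ?_⟩
      rcases RookAux.grid_edge_dich (w.edges_subset_edgeSet he1) with ⟨hh, _⟩ | ⟨hv, _⟩
      · exact absurd hh hnh
      · exact hv
  -- crossing cut parity
  have hcross_even : ∀ k : ℕ, Even (E.filter (RookAux.crossE k)).card := by
    intro k
    rw [hEdef, RookAux.card_filter_countP hnd]
    have hedges : w.edges = w.darts.map SimpleGraph.Dart.edge := rfl
    rw [hedges, List.countP_map]
    have heven := (RookAux.walk_cross_parity (fun a : Fin m × Fin n => (a.1:ℕ) ≤ k) w).mpr Iff.rfl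
    have hcongr : ∀ d ∈ w.darts,
        (decide (RookAux.crossE k d.edge) = true) ↔
        (decide (¬(((d.toProd.1.1 : ℕ) ≤ k) ↔ ((d.toProd.2.1 : ℕ) ≤ k))) = true) := by
      intro d _
      rw [decide_eq_true_eq, decide_eq_true_eq]
      have hadj := d.adj
      rw [RookAux.grid_adj] at hadj
      have hrows : (d.toProd.1.1 : ℕ) = d.toProd.2.1 ∨ (d.toProd.1.1:ℕ)+1 = d.toProd.2.1 ∨
          (d.toProd.2.1:ℕ)+1 = d.toProd.1.1 := by
        rcases hadj.2 with ⟨h1, _⟩ | ⟨_, h2⟩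
        · exact Or.inl (congrArg Fin.val h1)
        · tauto
      have hedge : d.edge = s(d.toProd.1, d.toProd.2) := rfl
      rw [hedge, RookAux.crossE_pair]
      omega
    have hcomp : ((fun a => decide (RookAux.crossE k a)) ∘ SimpleGraph.Dart.edge) =
        (fun d : (gridGraph m n).Dart => decide (RookAux.crossE k d.edge)) := rfl
    rw [hcomp, List.countP_congr (fun d hd => hcongr d hd)]
    convert heven using 3
    exact decide_eq_decide.mpr Iff.rfl
  intro i
  -- Part 1 : not all cells of row i are straight
  have h1 : ¬ ∀ v : Fin m × Fin n, v.1 = i → IsStraightCell w v := by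
    intro hall
    -- forcing lemma: a straight cell in row i whose "left" horizontal edge is
    -- excluded cannot have all incident edges horizontal
    have hforce : ∀ v : Fin m × Fin n, v.1 = i →
        (∀ e ∈ E, v ∈ e → horizEdge e) →
        (∀ e ∈ E, v ∈ e → ∀ u : Fin m × Fin n, e = s(v, u) → u.1 = v.1 →
          (u.2:ℕ) + 1 ≠ (v.2:ℕ)) → False := by
      intro v hvi hH hleft
      have h2 := hdeg v
      obtain ⟨a, ha, b, hb, hab⟩ := Finset.one_lt_card.mp (h2 ▸ Nat.one_lt_two)
      apply hab
      have key : ∀ e ∈ E.filter (fun e => v ∈ e),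
          ∃ (hlt : (v.2:ℕ)+1 < n), e = s(v, (v.1, ⟨(v.2:ℕ)+1, hlt⟩)) := by
        intro e he
        rw [Finset.mem_filter] at he
        obtain ⟨u, heq, hadj⟩ := RookAux.edge_inc (hEedge e he.1) he.2
        subst heq
        have hh : v.1 = u.1 :=
          (RookAux.horizEdge_pair v u).mp (hH _ he.1 he.2)
        rw [RookAux.grid_adj] at hadj
        rcases hadj.2 with ⟨_, hc | hc⟩ | ⟨_, hr⟩
        · refine ⟨by rw [hc]; exact u.2.isLt, ?_⟩
          have hu : u = (v.1, ⟨(v.2:ℕ)+1, by rw [hc]; exact u.2.isLt⟩) :=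
            Prod.ext hh.symm (Fin.ext hc.symm)
          exact congrArg (fun x => s(v, x)) hu
        · exact absurd hc (hleft _ he.1 he.2 u rfl hh.symm)
        · exfalso
          have hval := congrArg Fin.val hh
          omega
      obtain ⟨hlt1, ha'⟩ := key a ha
      obtain ⟨hlt2, hb'⟩ := key b hb
      rw [ha', hb']
    -- every edge incident to row i is vertical
    have hvert : ∀ (jv : ℕ) (hj : jv < n), ∀ e ∈ E,
        ((i, ⟨jv, hj⟩) : Fin m × Fin n) ∈ e → vertEdge e := by
      intro jv
      induction jv with
      | zero =>
        intro hj e heE hein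
        rcases hall (i, ⟨0, hj⟩) rfl with hH | hV
        · exfalso
          apply hforce (i, ⟨0, hj⟩) rfl (fun e he hv => hH e (hmemE.mp he) hv)
          intro e' he' hv' u heq hrow hcon
          exact Nat.succ_ne_zero _ hcon
        · exact hV e (hmemE.mp heE) hein
      | succ jp ih =>
        intro hj e heE hein
        have hjp : jp < n := Nat.lt_of_succ_lt hj
        rcases hall (i, ⟨jp+1, hj⟩) rfl with hH | hV
        · exfalso
          apply hforce (i, ⟨jp+1, hj⟩) rfl (fun e he hv => hH e (hmemE.mp he) hv)
          intro e' he' hv' u heq hrow hcon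
          have hcon' : (u.2:ℕ) + 1 = jp + 1 := hcon
          have h2v : (u.2:ℕ) = jp := by omega
          have hu : u = ((i, ⟨jp, hjp⟩) : Fin m × Fin n) :=
            Prod.ext hrow (Fin.ext h2v)
          have hvert' : vertEdge e' := by
            apply ih hjp e' he'
            rw [heq, hu]
            exact Sym2.mem_mk_right _ _
          have hhor : horizEdge e' := hH e' (hmemE.mp he') hv'
          rcases RookAux.grid_edge_dich (hEedge e' he') with ⟨_, hnv⟩ | ⟨_, hnh⟩
          · exact hnv hvert'
          · exact hnh hhor
        · exact hV e (hmemE.mp heE) hein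
    -- every cell of row i has an upward edge
    have hup : ∀ (jv : ℕ) (hj : jv < n), ∃ u : Fin m × Fin n,
        s(((i, ⟨jv, hj⟩) : Fin m × Fin n), u) ∈ E ∧ (u.2:ℕ) = jv ∧ (u.1:ℕ) = (i:ℕ)+1 := by
      intro jv hj
      by_contra hno
      push_neg at hno
      have h2 := hdeg ((i, ⟨jv, hj⟩) : Fin m × Fin n)
      obtain ⟨a, ha, b, hb, hab⟩ := Finset.one_lt_card.mp (h2 ▸ Nat.one_lt_two)
      apply hab
      have key : ∀ e ∈ E.filter (fun e => ((i, ⟨jv, hj⟩) : Fin m × Fin n) ∈ e),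
          ∃ u : Fin m × Fin n, e = s(((i, ⟨jv, hj⟩) : Fin m × Fin n), u) ∧
            (u.2:ℕ) = jv ∧ (u.1:ℕ)+1 = (i:ℕ) := by
        intro e he
        rw [Finset.mem_filter] at he
        obtain ⟨u, heq, hadj⟩ := RookAux.edge_inc (hEedge e he.1) he.2
        have hve : vertEdge e := hvert jv hj e he.1 he.2
        have hcc : ((⟨jv, hj⟩ : Fin n)) = u.2 :=
          (RookAux.vertEdge_pair ((i, ⟨jv, hj⟩) : Fin m × Fin n) u).mp (heq ▸ hve)
        have hccv : (u.2:ℕ) = jv := (congrArg Fin.val hcc).symm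
        rw [RookAux.grid_adj] at hadj
        rcases hadj.2 with ⟨_, hcol⟩ | ⟨_, hrr⟩
        · exfalso
          have hcv : (jv : ℕ) = (u.2:ℕ) := congrArg Fin.val hcc
          have hcol' : jv + 1 = (u.2:ℕ) ∨ (u.2:ℕ) + 1 = jv := hcol
          omega
        · rcases hrr with hr1 | hr2
          · exfalso
            apply hno u (heq ▸ he.1) hccv
            have hr1' : (i:ℕ) + 1 = (u.1:ℕ) := hr1
            omega
          · refine ⟨u, heq, hccv, ?_⟩
            have hr2' : (u.1:ℕ) + 1 = (i:ℕ) := hr2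
            exact hr2'
      obtain ⟨ua, haeq, hac, har⟩ := key a ha
      obtain ⟨ub, hbeq, hbc, hbr⟩ := key b hb
      have huu : ua = ub := Prod.ext (Fin.ext (by omega)) (Fin.ext (by rw [hac, hbc]))
      rw [haeq, hbeq, huu]
    -- hence the cut below row i is crossed by exactly n edges
    have hzero : 0 < n := hn.pos
    obtain ⟨u0, hu0mem, hu0c, hu0r⟩ := hup 0 hzero
    have him : (i:ℕ)+1 < m := by rw [← hu0r]; exact u0.1.isLt
    have hCFn : (E.filter (RookAux.crossE (i:ℕ))).card = n := by
      have hbij := Finset.card_bij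
        (s := (Finset.univ : Finset (Fin n))) (t := E.filter (RookAux.crossE (i:ℕ)))
        (fun j _ => s(((i, j) : Fin m × Fin n), ((⟨(i:ℕ)+1, him⟩ : Fin m), j)))
        ?_ ?_ ?_
      · rw [← hbij, Finset.card_univ, Fintype.card_fin]
      · intro j _
        obtain ⟨u, humem, huc, hur⟩ := hup j.1 j.isLt
        have hj : ((⟨j.1, j.isLt⟩ : Fin n)) = j := Fin.ext rfl
        have hu : u = ((⟨(i:ℕ)+1, him⟩ : Fin m), j) := Prod.ext (Fin.ext hur) (Fin.ext huc)
        rw [hj, hu] at humem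
        refine Finset.mem_filter.mpr ⟨humem, ?_⟩
        exact ⟨((i, j) : Fin m × Fin n), ((⟨(i:ℕ)+1, him⟩ : Fin m), j), rfl, rfl, rfl⟩
      · intro j1 hj1 j2 hj2 heq
        rw [Sym2.eq_iff] at heq
        rcases heq with ⟨hq1, _⟩ | ⟨hq1, _⟩
        · exact congrArg Prod.snd hq1
        · exfalso
          have hth : (i:ℕ) = ((⟨(i:ℕ)+1, him⟩ : Fin m) : ℕ) :=
            congrArg (fun p : Fin m × Fin n => (p.1 : ℕ)) hq1
          have hth2 : (i:ℕ) = (i:ℕ)+1 := hth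
          omega
      · intro e he
        rw [Finset.mem_filter] at he
        obtain ⟨heE, a, b, heq, ha1, hb1⟩ := he
        subst heq
        have hadj := (SimpleGraph.mem_edgeSet _).mp (hEedge _ heE)
        rw [RookAux.grid_adj] at hadj
        rcases hadj.2 with ⟨hr, _⟩ | ⟨hc, _⟩
        · exfalso
          have hrv := congrArg Fin.val hr
          omega
        · refine ⟨a.2, Finset.mem_univ _, ?_⟩
          have h1 : ((i, a.2) : Fin m × Fin n) = a := Prod.ext (Fin.ext ha1.symm) rfl
          have h2 : (((⟨(i:ℕ)+1, him⟩ : Fin m), a.2) : Fin m × Fin n) = b :=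
            Prod.ext (Fin.ext hb1.symm) hc
          show s(((i, a.2) : Fin m × Fin n), (((⟨(i:ℕ)+1, him⟩ : Fin m), a.2) : Fin m × Fin n)) =
            s(a, b)
          rw [h1, h2]
    exact (Nat.not_even_iff_odd.mpr hn) (hCFn ▸ hcross_even (i:ℕ))
  refine ⟨h1, ?_⟩
  set T := Finset.univ.filter (fun v : Fin m × Fin n => v.1 = i ∧ IsTurnCell w v) with hTdef
  have hsetT : {v : Fin m × Fin n | v.1 = i ∧ IsTurnCell w v} = ↑T := by
    ext v
    simp [hTdef]
  rw [hsetT, Set.ncard_coe_finset]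
  have hone : 0 < T.card := by
    rw [not_forall] at h1
    obtain ⟨v, hv⟩ := h1
    push_neg at hv
    exact Finset.card_pos.mpr
      ⟨v, Finset.mem_filter.mpr ⟨Finset.mem_univ _, hv.1, hns_turn v hv.2⟩⟩
  have hTj : T.card = (Finset.univ.filter (fun j : Fin n => vdeg (i, j) = 1)).card := by
    apply Finset.card_bij (fun v _ => v.2)
    · intro v hv
      rw [hTdef, Finset.mem_filter] at hv
      rw [Finset.mem_filter]
      refine ⟨Finset.mem_univ _, ?_⟩
      have h := (hturn_iff v).mp hv.2.2
      rw [← hv.2.1, Prod.mk.eta]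
      exact h
    · intro v1 hv1 v2 hv2 heq
      rw [hTdef, Finset.mem_filter] at hv1 hv2
      exact Prod.ext (hv1.2.1.trans hv2.2.1.symm) heq
    · intro j hjmem
      rw [Finset.mem_filter] at hjmem
      exact ⟨(i, j), Finset.mem_filter.mpr ⟨Finset.mem_univ _, rfl, (hturn_iff _).mpr hjmem.2⟩, rfl⟩
  have hDsum : ∑ j : Fin n, vdeg (i, j) =
      (E.filter (fun e => vertEdge e ∧ ∃ j : Fin n, ((i, j) : Fin m × Fin n) ∈ e)).card := by
    rw [Finset.card_filter,
      Finset.sum_congr rfl (fun j (_ : j ∈ Finset.univ) => Finset.card_filter _ _),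
      Finset.sum_comm]
    apply Finset.sum_congr rfl
    intro e heE
    exact RookAux.sum_inc_row' (hEedge e heE) i
  have hDeven : Even (E.filter (fun e => vertEdge e ∧ ∃ j : Fin n,
      ((i, j) : Fin m × Fin n) ∈ e)).card := by
    have hiff : ∀ e ∈ E, ((vertEdge e ∧ ∃ j : Fin n, ((i, j) : Fin m × Fin n) ∈ e) ↔
        (RookAux.crossE (i:ℕ) e ∨ ((i:ℕ) ≠ 0 ∧ RookAux.crossE ((i:ℕ)-1) e))) := by
      intro e
      induction e using Sym2.ind with
      | _ a b =>
        intro he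
        exact RookAux.vert_inc_iff ((SimpleGraph.mem_edgeSet _).mp (hEedge _ he)) i
    have hsplit : E.filter (fun e => vertEdge e ∧ ∃ j : Fin n, ((i, j) : Fin m × Fin n) ∈ e) =
        E.filter (RookAux.crossE (i:ℕ)) ∪
        E.filter (fun e => (i:ℕ) ≠ 0 ∧ RookAux.crossE ((i:ℕ)-1) e) := by
      ext e
      simp only [Finset.mem_filter, Finset.mem_union]
      constructor
      · rintro ⟨he, hP⟩
        rcases (hiff e he).mp hP with h | h
        · exact Or.inl ⟨he, h⟩
        · exact Or.inr ⟨he, h⟩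
      · rintro (⟨he, h⟩ | ⟨he, h⟩)
        · exact ⟨he, (hiff e he).mpr (Or.inl h)⟩
        · exact ⟨he, (hiff e he).mpr (Or.inr h)⟩
    have hdisj : Disjoint (E.filter (RookAux.crossE (i:ℕ)))
        (E.filter (fun e => (i:ℕ) ≠ 0 ∧ RookAux.crossE ((i:ℕ)-1) e)) := by
      rw [Finset.disjoint_left]
      intro e h1' h2'
      rw [Finset.mem_filter] at h1' h2'
      exact RookAux.crossE_ne (k := (i:ℕ)) (l := (i:ℕ)-1)
        (by have := h2'.2.1; omega) h1'.2 h2'.2.2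
    rw [hsplit, Finset.card_union_of_disjoint hdisj]
    apply Even.add (hcross_even (i:ℕ))
    by_cases h0 : (i:ℕ) = 0
    · have hempty : E.filter (fun e => (i:ℕ) ≠ 0 ∧ RookAux.crossE ((i:ℕ)-1) e) = ∅ := by
        apply Finset.filter_false_of_mem
        intro e _
        simp [h0]
      rw [hempty]
      simp
    · have heqf : E.filter (fun e => (i:ℕ) ≠ 0 ∧ RookAux.crossE ((i:ℕ)-1) e) =
          E.filter (RookAux.crossE ((i:ℕ)-1)) := by
        ext e
        simp only [Finset.mem_filter]
        tauto
      rw [heqf]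
      exact hcross_even _
  have hSe : Even (∑ j : Fin n, vdeg (i, j)) := by
    rw [hDsum]
    exact hDeven
  have heT : Even T.card := by
    rw [hTj]
    have hmod : (∑ j : Fin n, vdeg (i, j)) % 2 =
        (Finset.univ.filter (fun j : Fin n => vdeg (i, j) = 1)).card % 2 := by
      rw [Finset.sum_nat_mod, Finset.card_filter]
      congr 1
      apply Finset.sum_congr rfl
      intro j _
      have hle := hvle (i, j)
      by_cases hj1 : vdeg (i, j) = 1
      · simp [hj1]
      · rw [if_neg hj1]
        omega
    rw [Nat.even_iff] at hSe ⊢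
    omega
  rw [Nat.even_iff] at heT
  omega
end

section
/- If n ≡ 0 (mod 4), every rook circuit on an n × (n+1) chessboard has at least n straight-cells. -/
open SimpleGraph

private lemma countP_disj_bool {α : Type*} (p q : α → Bool) :
    ∀ l : List α, (∀ a ∈ l, ¬(p a ∧ q a)) →
      l.countP (fun a => p a || q a) = l.countP p + l.countP q
  | [], _ => by simp
  | a :: l, h => by
    have ih := countP_disj_bool p q l (fun x hx => h x (List.mem_cons_of_mem a hx))
    have ha := h a List.mem_cons_self
    cases hp : p a <;> cases hq : q a <;>
      simp_all [List.countP_cons, hp, hq, ih] <;> omega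

private lemma incident_count {V : Type*} [DecidableEq V] {G : SimpleGraph V} {v₀ : V}
    {w : G.Walk v₀ v₀} (hw : w.IsHamiltonianCycle) (v : V) :
    w.edges.countP (fun e => decide (v ∈ e)) = 2 := by
  have hfst : (w.darts.map (·.fst)).count v = 1 := by
    have happ := congrArg (List.count v) (SimpleGraph.Walk.map_fst_darts_append w)
    rw [List.count_append] at happ
    by_cases hv : v = v₀
    · subst hv
      rw [hw.count_support_self] at happ
      simpa using happ
    · rw [hw.support_count_of_ne (Ne.symm hv)] at happ
      simpa [List.count_singleton, hv, Ne.symm hv] using happ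
  have hsnd : (w.darts.map (·.snd)).count v = 1 := by
    rw [SimpleGraph.Walk.map_snd_darts, ← SimpleGraph.Walk.support_tail_of_not_nil w hw.isCycle.not_nil]
    exact hw.isHamiltonian_tail v
  have hfst' : w.darts.countP (fun d => decide (d.fst = v)) = 1 := by
    rw [← hfst, List.count_eq_countP, List.countP_map]
    apply List.countP_congr; intro d _; simp
  have hsnd' : w.darts.countP (fun d => decide (d.snd = v)) = 1 := by
    rw [← hsnd, List.count_eq_countP, List.countP_map]
    apply List.countP_congr; intro d _; simp
  have h1 : w.edges.countP (fun e => decide (v ∈ e)) =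
      w.darts.countP (fun d => decide (d.fst = v) || decide (d.snd = v)) := by
    rw [SimpleGraph.Walk.edges, List.countP_map]
    apply List.countP_congr
    intro d _
    obtain ⟨⟨a, b⟩, hab⟩ := d
    simp only [Function.comp_apply, SimpleGraph.Dart.edge_mk]
    simp only [decide_eq_true_eq, Bool.or_eq_true, Sym2.mem_iff]
    exact or_congr eq_comm eq_comm
  rw [h1, countP_disj_bool _ _ w.darts
    (fun d _ hd => d.fst_ne_snd ((of_decide_eq_true hd.1).trans (of_decide_eq_true hd.2).symm)),
    hfst', hsnd']

private lemma edge_horiz_or_vert {n m : ℕ} {e : Sym2 (Fin n × Fin m)}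
    (he : e ∈ (gridGraph n m).edgeSet) : horizEdge e ∨ vertEdge e := by
  induction e using Sym2.ind with
  | _ a b =>
    rw [SimpleGraph.mem_edgeSet, gridGraph, SimpleGraph.fromRel_adj] at he
    rcases he.2 with (⟨h, _⟩ | ⟨h, _⟩) | (⟨h, _⟩ | ⟨h, _⟩)
    · exact Or.inl ⟨a, b, rfl, h⟩
    · exact Or.inr ⟨a, b, rfl, h⟩
    · exact Or.inl ⟨a, b, rfl, h.symm⟩
    · exact Or.inr ⟨a, b, rfl, h.symm⟩

private lemma vert_endpoints {n m : ℕ} {e : Sym2 (Fin n × Fin m)}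
    (he : e ∈ (gridGraph n m).edgeSet) (hv : vertEdge e) :
    ∃ a b : Fin n × Fin m, e = s(a, b) ∧ a ≠ b ∧ a.2 = b.2 := by
  obtain ⟨a, b, rfl, h2⟩ := hv
  exact ⟨a, b, rfl, ((SimpleGraph.mem_edgeSet _).mp he).ne, h2⟩

private lemma card_filter_toFinset {α : Type*} [DecidableEq α] {l : List α} (h : l.Nodup)
    (p : α → Prop) [DecidablePred p] :
    (l.toFinset.filter p).card = l.countP (fun a => decide (p a)) := by
  rw [List.countP_eq_length_filter, ← List.toFinset_card_of_nodup (h.filter _),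
    List.toFinset_filter]
  congr 1
  ext a
  simp

private lemma exists_straight {n : ℕ} (hn2 : n % 2 = 0) {v₀ : Fin (n + 1) × Fin n}
    {w : (gridGraph (n + 1) n).Walk v₀ v₀} (hw : w.IsHamiltonianCycle) (c : Fin n) :
    ∃ v : Fin (n + 1) × Fin n, v.2 = c ∧ IsStraightCell w v := by
  classical
  by_contra hcon
  push_neg at hcon
  have hnd : w.edges.Nodup := hw.isCycle.isCircuit.isTrail.edges_nodup
  set E := w.edges.toFinset with hE
  set col : Finset (Fin (n + 1) × Fin n) := Finset.univ.filter (fun v => v.2 = c) with hcol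
  have hone : ∀ v ∈ col, (E.filter (fun e => v ∈ e ∧ vertEdge e)).card = 1 := by
    intro v hv
    have hvc : v.2 = c := by simpa [hcol] using hv
    have hns := hcon v hvc
    rw [IsStraightCell] at hns
    push_neg at hns
    obtain ⟨⟨e₁, he₁, hve₁, hh₁⟩, e₂, he₂, hve₂, hh₂⟩ := hns
    have he₁' : vertEdge e₁ := (edge_horiz_or_vert (w.edges_subset_edgeSet he₁)).resolve_left hh₁
    have htot : (E.filter (fun e => v ∈ e)).card = 2 := by
      rw [hE, card_filter_toFinset hnd]
      exact incident_count hw v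
    have hsplit := Finset.card_filter_add_card_filter_not
      (s := E.filter (fun e => v ∈ e)) (p := vertEdge)
    rw [Finset.filter_filter, Finset.filter_filter] at hsplit
    have h1 : 0 < (E.filter (fun e => v ∈ e ∧ vertEdge e)).card :=
      Finset.card_pos.mpr ⟨e₁, by simp [hE, List.mem_toFinset, he₁, hve₁, he₁']⟩
    have h2 : 0 < (E.filter (fun e => v ∈ e ∧ ¬ vertEdge e)).card :=
      Finset.card_pos.mpr ⟨e₂, by simp [hE, List.mem_toFinset, he₂, hve₂, hh₂]⟩
    omega
  have hsum : ∑ v ∈ col, (E.filter (fun e => v ∈ e ∧ vertEdge e)).card = n + 1 := by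
    rw [Finset.sum_congr rfl hone, Finset.sum_const, smul_eq_mul, mul_one]
    have himg : col = Finset.univ.image (fun i : Fin (n + 1) => (i, c)) := by
      ext ⟨x, y⟩
      simp [hcol, Prod.ext_iff, eq_comm]
    rw [himg, Finset.card_image_of_injective _ (fun a b h => (Prod.ext_iff.mp h).1),
      Finset.card_univ, Fintype.card_fin]
  have hdvd : 2 ∣ ∑ v ∈ col, (E.filter (fun e => v ∈ e ∧ vertEdge e)).card := by
    have hrw : ∀ v ∈ col, (E.filter (fun e => v ∈ e ∧ vertEdge e)).card
        = ∑ e ∈ E, if v ∈ e ∧ vertEdge e then 1 else 0 := fun v _ => by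
      rw [Finset.card_filter]
    rw [Finset.sum_congr rfl hrw, Finset.sum_comm]
    apply Finset.dvd_sum
    intro e heE
    by_cases hv : vertEdge e
    · obtain ⟨a, b, hab, hane, hc2⟩ :=
        vert_endpoints (w.edges_subset_edgeSet (List.mem_toFinset.mp heE)) hv
      subst hab
      by_cases hac : a.2 = c
      · have hset : col.filter (fun v => v ∈ s(a, b) ∧ vertEdge (s(a, b))) = {a, b} := by
          ext u
          simp only [Finset.mem_filter, hcol, Finset.mem_univ, true_and, Sym2.mem_iff,
            Finset.mem_insert, Finset.mem_singleton, hv, and_true]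
          constructor
          · rintro ⟨_, rfl | rfl⟩ <;> simp
          · rintro (rfl | rfl)
            · exact ⟨hac, Or.inl rfl⟩
            · exact ⟨hc2 ▸ hac, Or.inr rfl⟩
        rw [← Finset.card_filter, hset, Finset.card_insert_of_notMem (by simp [hane]),
          Finset.card_singleton]
      · have hset : col.filter (fun v => v ∈ s(a, b) ∧ vertEdge (s(a, b))) = ∅ := by
          ext u
          simp only [Finset.mem_filter, hcol, Finset.mem_univ, true_and, Sym2.mem_iff,
            Finset.notMem_empty, iff_false, not_and, and_imp]
          rintro h1 (rfl | rfl)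
          · exact absurd h1 hac
          · exact absurd (hc2.trans h1) hac
        rw [← Finset.card_filter, hset, Finset.card_empty]
        exact dvd_zero 2
    · simp [hv]
  rw [hsum] at hdvd
  omega


/-- If `n ≡ 0 (mod 4)`, every rook circuit on an `n × (n+1)` chessboard
(`n` columns, each of odd length `n+1`) has at least `n` straight-cells. -/
theorem min_straights_n_np1_mod0 (n : ℕ) (hn : n % 4 = 0)
    (v₀ : Fin (n + 1) × Fin n) (w : (gridGraph (n + 1) n).Walk v₀ v₀)
    (hw : w.IsHamiltonianCycle) :
    n ≤ {v : Fin (n + 1) × Fin n | IsStraightCell w v}.ncard := by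
  classical
  have hs : ∀ c : Fin n, ∃ v : Fin (n + 1) × Fin n, v.2 = c ∧ IsStraightCell w v :=
    fun c => exists_straight (by omega) hw c
  choose f hf1 hf2 using hs
  have hinj : Function.Injective f := fun a b hab => by
    rw [← hf1 a, ← hf1 b, hab]
  have h1 : Set.range f ⊆ {v | IsStraightCell w v} := by
    rintro _ ⟨c, rfl⟩
    exact hf2 c
  have h2 : (Set.range f).ncard = n := by
    rw [← Nat.card_coe_set_eq, Nat.card_range_of_injective hinj, Nat.card_eq_fintype_card,
      Fintype.card_fin]
  calc n = (Set.range f).ncard := h2.symm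
    _ ≤ _ := Set.ncard_le_ncard h1 (Set.toFinite _)
end

section
/- If n ≡ 1 (mod 4), every rook circuit on an n × (n+1) chessboard has at least n + 1 straight-cells. -/
/- ### Auxiliary lemmas -/

instance {n m : ℕ} (e : Sym2 (Fin n × Fin m)) : Decidable (vertEdge e) := by
  unfold vertEdge; infer_instance

instance {n m : ℕ} (e : Sym2 (Fin n × Fin m)) : Decidable (horizEdge e) := by
  unfold horizEdge; infer_instance

section CycleLemmas

open SimpleGraph Walk

variable {V : Type*} [DecidableEq V] {G : SimpleGraph V}

omit [DecidableEq V] in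
lemma walk_nodup_loop_nil {b : V} (q : G.Walk b b) (h : q.support.Nodup) : q = nil := by
  cases q with
  | nil => rfl
  | cons h' q' =>
    exfalso
    rw [support_cons, List.nodup_cons] at h
    exact h.1 (end_mem_support q')

lemma countP_endpoint {a b : V} (q : G.Walk a b) (hnd : q.support.Nodup) (hne : b ≠ a) :
    q.edges.countP (fun e => decide (b ∈ e)) = 1 := by
  induction q with
  | nil => exact absurd rfl hne
  | @cons u x v h' q' ih =>
    rw [support_cons, List.nodup_cons] at hnd
    rw [edges_cons, List.countP_cons]
    by_cases hbx : v = x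
    · subst hbx
      have : q' = nil := walk_nodup_loop_nil q' hnd.2
      subst this
      simp [Sym2.mem_iff]
    · have h1 : q'.edges.countP (fun e => decide (v ∈ e)) = 1 := ih hnd.2 hbx
      have h2 : ¬ (v ∈ s(u, x)) := by
        simp only [Sym2.mem_iff]
        rintro (rfl | rfl)
        · exact hne rfl
        · exact hbx rfl
      simp [h1, h2]

/-- In a cycle, every vertex of the support lies in exactly two edges. -/
lemma countP_two_of_cycle {v₀ : V} (w : G.Walk v₀ v₀) (hw : w.IsCycle) (v : V)
    (hv : v ∈ w.support) : w.edges.countP (fun e => decide (v ∈ e)) = 2 := by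
  have hperm := (w.rotate_edges v hv).perm
  rw [← hperm.countP_eq]
  have hc : (w.rotate v hv).IsCycle := hw.rotate hv
  revert hc
  generalize (w.rotate v hv) = c
  intro hc
  cases c with
  | nil => exact absurd rfl hc.ne_nil
  | cons h' q =>
    rename_i u
    have hnd : q.support.Nodup := by
      have := hc.2
      rwa [support_cons, List.tail_cons] at this
    have hvu : v ≠ u := fun h => (G.irrefl (h ▸ h'))
    rw [edges_cons, List.countP_cons, countP_endpoint q hnd hvu]
    simp [Sym2.mem_iff]

end CycleLemmas

section CountLemmas

variable {α β : Type*}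

lemma countP_split (l : List α) (p q : α → Prop) [DecidablePred p] [DecidablePred q] :
    l.countP (fun e => decide (p e ∧ q e)) + l.countP (fun e => decide (p e ∧ ¬ q e))
      = l.countP (fun e => decide (p e)) := by
  induction l with
  | nil => simp
  | cons a l ih =>
    simp only [List.countP_cons]
    have h1 : (if decide (p a ∧ q a) = true then 1 else 0)
        + (if decide (p a ∧ ¬ q a) = true then 1 else 0)
        = (if decide (p a) = true then 1 else 0) := by
      by_cases hp : p a <;> by_cases hq : q a <;> simp [hp, hq]
    omega

lemma sum_countP [Fintype β] (l : List α) (p : β → α → Bool) :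
    ∑ r : β, l.countP (p r)
      = (l.map (fun e => (Finset.univ.filter (fun r => p r e)).card)).sum := by
  induction l with
  | nil => simp
  | cons a l ih =>
    simp only [List.countP_cons, List.map_cons, List.sum_cons]
    rw [Finset.sum_add_distrib, ih, Finset.card_filter, add_comm]

end CountLemmas

section GridLemmas

lemma grid_edge_cases {n m : ℕ} (e : Sym2 (Fin n × Fin m))
    (he : e ∈ (gridGraph n m).edgeSet) :
    (horizEdge e ∨ vertEdge e) ∧ ¬ (horizEdge e ∧ vertEdge e) := by
  induction e with
  | _ a b =>
    rw [SimpleGraph.mem_edgeSet] at he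
    obtain ⟨hne, hrel⟩ := he
    constructor
    · rcases hrel with (⟨h1, _⟩ | ⟨h1, _⟩) | (⟨h1, _⟩ | ⟨h1, _⟩)
      · exact Or.inl ⟨a, b, rfl, h1⟩
      · exact Or.inr ⟨a, b, rfl, h1⟩
      · exact Or.inl ⟨a, b, rfl, h1.symm⟩
      · exact Or.inr ⟨a, b, rfl, h1.symm⟩
    · rintro ⟨⟨p, q, hpq, h1⟩, ⟨r, t, hrt, h2⟩⟩
      have hab1 : a.1 = b.1 := by
        rw [Sym2.eq_iff] at hpq
        rcases hpq with ⟨rfl, rfl⟩ | ⟨rfl, rfl⟩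
        · exact h1
        · exact h1.symm
      have hab2 : a.2 = b.2 := by
        rw [Sym2.eq_iff] at hrt
        rcases hrt with ⟨rfl, rfl⟩ | ⟨rfl, rfl⟩
        · exact h2
        · exact h2.symm
      exact hne (Prod.ext hab1 hab2)

lemma vert_edge_structure {n m : ℕ} (e : Sym2 (Fin n × Fin m))
    (he : e ∈ (gridGraph n m).edgeSet) (hv : vertEdge e) :
    ∃ a b : Fin n × Fin m, e = s(a, b) ∧ a.2 = b.2 ∧ a.1 ≠ b.1 := by
  obtain ⟨a, b, rfl, h2⟩ := hv
  rw [SimpleGraph.mem_edgeSet] at he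
  refine ⟨a, b, rfl, h2, fun h1 => he.1 (Prod.ext h1 h2)⟩

/-- A turn cell on a Hamiltonian cycle has exactly one incident vertical edge. -/
lemma turn_vert_count {n m : ℕ} {v₀ : Fin n × Fin m} (w : (gridGraph n m).Walk v₀ v₀)
    (hw : w.IsHamiltonianCycle) (v : Fin n × Fin m) (hturn : IsTurnCell w v) :
    w.edges.countP (fun e => decide (v ∈ e ∧ vertEdge e)) = 1 := by
  have htot : w.edges.countP (fun e => decide (v ∈ e)) = 2 :=
    countP_two_of_cycle w hw.isCycle v (hw.mem_support v)
  have hsplit := countP_split w.edges (fun e => v ∈ e) (fun e => vertEdge e)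
  rw [htot] at hsplit
  obtain ⟨⟨e₁, he₁, hve₁, hh₁⟩, ⟨e₂, he₂, hve₂, hv₂⟩⟩ := hturn
  have hpos₂ : 0 < w.edges.countP (fun e => decide (v ∈ e ∧ vertEdge e)) := by
    rw [List.countP_pos_iff]
    exact ⟨e₂, he₂, by simp [hve₂, hv₂]⟩
  have hnv₁ : ¬ vertEdge e₁ := fun hv1 =>
    (grid_edge_cases e₁ (w.edges_subset_edgeSet he₁)).2 ⟨hh₁, hv1⟩
  have hpos₁ : 0 < w.edges.countP (fun e => decide (v ∈ e ∧ ¬ vertEdge e)) := by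
    rw [List.countP_pos_iff]
    exact ⟨e₁, he₁, by simp [hve₁, hnv₁]⟩
  omega

/-- Every column of odd length contains a straight cell. -/
lemma column_has_straight {n m : ℕ} (hodd : n % 2 = 1) {v₀ : Fin n × Fin m}
    (w : (gridGraph n m).Walk v₀ v₀) (hw : w.IsHamiltonianCycle) (c : Fin m) :
    ∃ v : Fin n × Fin m, v.2 = c ∧ IsStraightCell w v := by
  by_contra hcon
  push_neg at hcon
  -- every cell in column `c` is a turn cell
  have hturn : ∀ r : Fin n, IsTurnCell w (r, c) := by
    intro r
    have hns : ¬ IsStraightCell w (r, c) := hcon (r, c) rfl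
    unfold IsStraightCell at hns
    push_neg at hns
    obtain ⟨⟨e₁, he₁, hve₁, hnh₁⟩, ⟨e₂, he₂, hve₂, hnv₂⟩⟩ := hns
    have h1 := grid_edge_cases e₁ (w.edges_subset_edgeSet he₁)
    have h2 := grid_edge_cases e₂ (w.edges_subset_edgeSet he₂)
    exact ⟨⟨e₂, he₂, hve₂, h2.1.resolve_right hnv₂⟩,
           ⟨e₁, he₁, hve₁, h1.1.resolve_left hnh₁⟩⟩
  have hsum : ∑ r : Fin n, w.edges.countP
      (fun e => decide ((r, c) ∈ e ∧ vertEdge e)) = n := by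
    rw [Finset.sum_congr rfl
      (fun r _ => turn_vert_count w hw (r, c) (hturn r))]
    simp
  rw [sum_countP] at hsum
  have heven : 2 ∣ (w.edges.map
      (fun e => (Finset.univ.filter
        (fun r : Fin n => decide ((r, c) ∈ e ∧ vertEdge e))).card)).sum := by
    apply List.dvd_sum
    intro x hx
    rw [List.mem_map] at hx
    obtain ⟨e, he, rfl⟩ := hx
    by_cases hv : vertEdge e
    · obtain ⟨a, b, rfl, h2, h1⟩ := vert_edge_structure e (w.edges_subset_edgeSet he) hv
      by_cases hac : a.2 = c
      · have : (Finset.univ.filter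
            (fun r : Fin n => decide ((r, c) ∈ s(a, b) ∧ vertEdge s(a, b)))) = {a.1, b.1} := by
          ext r
          simp only [Finset.mem_filter, Finset.mem_univ, true_and, Finset.mem_insert,
            Finset.mem_singleton, decide_eq_true_eq, Sym2.mem_iff]
          constructor
          · rintro ⟨hr | hr, -⟩
            · exact Or.inl (congrArg Prod.fst hr)
            · exact Or.inr (congrArg Prod.fst hr)
          · rintro (rfl | rfl)
            · exact ⟨Or.inl (Prod.ext rfl hac.symm), hv⟩
            · exact ⟨Or.inr (Prod.ext rfl (by rw [← h2, hac])), hv⟩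
        rw [this, Finset.card_insert_of_notMem (by simpa using h1), Finset.card_singleton]
      · have : (Finset.univ.filter
            (fun r : Fin n => decide ((r, c) ∈ s(a, b) ∧ vertEdge s(a, b)))) = ∅ := by
          ext r
          simp only [Finset.mem_filter, Finset.mem_univ, true_and, Finset.notMem_empty,
            iff_false, decide_eq_true_eq, Sym2.mem_iff]
          rintro ⟨hr | hr, -⟩
          · exact hac (congrArg Prod.snd hr).symm
          · exact hac (h2.trans (congrArg Prod.snd hr).symm)
        rw [this, Finset.card_empty]
        exact dvd_zero 2
    · have : (Finset.univ.filter
          (fun r : Fin n => decide ((r, c) ∈ e ∧ vertEdge e))) = ∅ := by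
        ext r
        simp only [Finset.mem_filter, Finset.mem_univ, true_and, Finset.notMem_empty,
          iff_false, decide_eq_true_eq]
        rintro ⟨-, hve⟩
        exact hv hve
      rw [this, Finset.card_empty]
      exact dvd_zero 2
  rw [hsum] at heven
  omega

end GridLemmas

/-- If `n ≡ 1 (mod 4)`, every rook circuit on an `n × (n+1)` chessboard
(`n+1` columns, each of odd length `n`) has at least `n + 1` straight-cells. -/
theorem min_straights_n_np1_mod1 (n : ℕ) (hn : n % 4 = 1)
    (v₀ : Fin n × Fin (n + 1)) (w : (gridGraph n (n + 1)).Walk v₀ v₀)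
    (hw : w.IsHamiltonianCycle) :
    n + 1 ≤ {v : Fin n × Fin (n + 1) | IsStraightCell w v}.ncard := by
  have hodd : n % 2 = 1 := by omega
  have hex : ∀ c : Fin (n + 1), ∃ v : Fin n × Fin (n + 1),
      v.2 = c ∧ IsStraightCell w v := fun c => column_has_straight hodd w hw c
  choose f hfc hfs using hex
  have hfin : {v : Fin n × Fin (n + 1) | IsStraightCell w v}.Finite := Set.toFinite _
  rw [Set.ncard_eq_toFinset_card _ hfin]
  have hcard : (Finset.univ : Finset (Fin (n + 1))).card ≤ hfin.toFinset.card :=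
    Finset.card_le_card_of_injOn f (fun c _ => hfin.mem_toFinset.mpr (hfs c))
      (fun c₁ _ c₂ _ h => by rw [← hfc c₁, ← hfc c₂, h])
  simpa using hcard
end
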